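/- arXiv:2112.13951 — 4 statements merged into one kernel-verified Lean document; each statement's English description precedes it below -/
import Mathlib

section
/- Suppose ⌊β/2⌋ = 1 and the covariate X is uniformly distributed, at least over the ball B_R(X*). Then condition (C-3) holds with φ = 1 − 1/(2(d+1)²): that is, with ζ_n = (Σ_{i=1}^{N_n} r_i)² / (Σ_{i=1}^{N_n} r_i²) computed from the N_n distances r_i = ‖X_i − X*‖₂ not exceeding r̃_n, there exist constants c, C, τ > 0 such that P(ζ_n ≥ (1 − 1/(2(d+1)²)) N_n) ≤ C exp(−c n^τ) for all n. -/
open MeasureTheory ProbabilityTheory Metric Finset Filter Real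


section Chernoff

variable {Ω : Type*} [MeasureSpace Ω] [IsProbabilityMeasure (ℙ : Measure Ω)]

lemma exp_quad_bound {t : ℝ} (ht : |t| ≤ 1) : Real.exp t ≤ 1 + t + t ^ 2 := by
  have h := Real.exp_bound ht (n := 2) (by norm_num)
  have h2 : ∑ i ∈ Finset.range 2, t ^ i / (Nat.factorial i : ℝ) = 1 + t := by
    simp [Finset.sum_range_succ]
  rw [h2] at h
  have h3 : Real.exp t - (1 + t) ≤ |t| ^ 2 * ((2 + 1 : ℕ) / ((Nat.factorial 2 : ℕ) * 2)) :=
    (le_abs_self _).trans h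
  have h4 : |t| ^ 2 = t ^ 2 := sq_abs t
  rw [h4] at h3
  norm_num [Nat.factorial] at h3
  nlinarith [sq_nonneg t]

lemma mgf_le_of_mean {Y : Ω → ℝ} (hmeas : Measurable Y)
    (h01 : ∀ ω, Y ω ∈ Set.Icc (0 : ℝ) 1) (t : ℝ) :
    mgf Y ℙ t ≤ Real.exp ((∫ ω, Y ω ∂ℙ) * (Real.exp t - 1)) := by
  have hint : Integrable Y ℙ := by
    refine Integrable.mono' (integrable_const 1) hmeas.aestronglyMeasurable ?_
    exact Filter.Eventually.of_forall fun ω => by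
      rw [Real.norm_eq_abs, abs_le]; exact ⟨by linarith [(h01 ω).1], (h01 ω).2⟩
  have hptwise : ∀ ω, Real.exp (t * Y ω) ≤ 1 + Y ω * (Real.exp t - 1) := by
    intro ω
    obtain ⟨hy0, hy1⟩ := h01 ω
    have := convexOn_exp.2 (Set.mem_univ (0 : ℝ)) (Set.mem_univ t)
      (by linarith : (0:ℝ) ≤ 1 - Y ω) hy0 (by ring)
    simp only [smul_eq_mul, mul_zero, zero_add, Real.exp_zero, mul_one] at this
    calc Real.exp (t * Y ω) = Real.exp (Y ω * t) := by rw [mul_comm]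
      _ ≤ (1 - Y ω) * 1 + Y ω * Real.exp t := by simpa [mul_comm] using this
      _ = 1 + Y ω * (Real.exp t - 1) := by ring
  have hintexp : Integrable (fun ω => Real.exp (t * Y ω)) ℙ := by
    refine Integrable.mono' (integrable_const (Real.exp |t|))
      ((hmeas.const_mul t).exp.aestronglyMeasurable) ?_
    refine Filter.Eventually.of_forall fun ω => ?_
    rw [Real.norm_eq_abs, abs_of_pos (Real.exp_pos _)]
    apply Real.exp_le_exp.2
    calc t * Y ω ≤ |t * Y ω| := le_abs_self _
      _ = |t| * |Y ω| := abs_mul _ _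
      _ ≤ |t| * 1 := by
          gcongr
          rw [abs_le]; exact ⟨by linarith [(h01 ω).1], (h01 ω).2⟩
      _ = |t| := mul_one _
  have h1 : mgf Y ℙ t ≤ ∫ ω, (1 + Y ω * (Real.exp t - 1)) ∂ℙ := by
    refine integral_mono hintexp ?_ hptwise
    exact (integrable_const 1).add (hint.mul_const _)
  have h2 : ∫ ω, (1 + Y ω * (Real.exp t - 1)) ∂ℙ
      = 1 + (∫ ω, Y ω ∂ℙ) * (Real.exp t - 1) := by
    rw [integral_add (integrable_const 1) (hint.mul_const _), integral_const,
      integral_mul_const]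
    simp
  exact (h1.trans_eq h2).trans (by linarith [Real.add_one_le_exp ((∫ ω, Y ω ∂ℙ) * (Real.exp t - 1))])

lemma chernoff_mgf_sum {Y : ℕ → Ω → ℝ} (hmeas : ∀ i, Measurable (Y i))
    (hindep : iIndepFun Y ℙ)
    (h01 : ∀ i ω, Y i ω ∈ Set.Icc (0 : ℝ) 1) {m : ℝ} (hm : ∀ i, ∫ ω, Y i ω ∂ℙ = m)
    (n : ℕ) (t : ℝ) :
    mgf (∑ i ∈ Finset.range n, Y i) ℙ t ≤ Real.exp ((n : ℝ) * m * (Real.exp t - 1)) := by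
  rw [hindep.mgf_sum hmeas (Finset.range n)]
  calc ∏ i ∈ Finset.range n, mgf (Y i) ℙ t
      ≤ ∏ _i ∈ Finset.range n, Real.exp (m * (Real.exp t - 1)) := by
        refine Finset.prod_le_prod (fun i _ => mgf_nonneg) fun i _ => ?_
        have := mgf_le_of_mean (hmeas i) (h01 i) t
        rwa [hm i] at this
    _ = Real.exp ((n : ℝ) * m * (Real.exp t - 1)) := by
        rw [Finset.prod_const, Finset.card_range, ← Real.exp_nat_mul]
        ring_nf

lemma integrable_exp_sum_bdd {Y : ℕ → Ω → ℝ} (hmeas : ∀ i, Measurable (Y i))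
    (h01 : ∀ i ω, Y i ω ∈ Set.Icc (0 : ℝ) 1) (n : ℕ) (t : ℝ) :
    Integrable (fun ω => Real.exp (t * (∑ i ∈ Finset.range n, Y i) ω)) ℙ := by
  have hSm : Measurable (fun ω => (∑ i ∈ Finset.range n, Y i) ω) := by
    simp only [Finset.sum_apply]
    exact Finset.measurable_sum _ fun i _ => hmeas i
  refine Integrable.mono' (integrable_const (Real.exp (|t| * n)))
    ((hSm.const_mul t).exp.aestronglyMeasurable) ?_
  refine Filter.Eventually.of_forall fun ω => ?_
  rw [Real.norm_eq_abs, abs_of_pos (Real.exp_pos _)]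
  apply Real.exp_le_exp.2
  have hsum0 : 0 ≤ (∑ i ∈ Finset.range n, Y i) ω := by
    rw [Finset.sum_apply]
    exact Finset.sum_nonneg fun i _ => (h01 i ω).1
  have hsumn : (∑ i ∈ Finset.range n, Y i) ω ≤ n := by
    rw [Finset.sum_apply]
    calc ∑ i ∈ Finset.range n, Y i ω ≤ ∑ _i ∈ Finset.range n, (1:ℝ) :=
          Finset.sum_le_sum fun i _ => (h01 i ω).2
      _ = n := by simp
  calc t * (∑ i ∈ Finset.range n, Y i) ω ≤ |t| * (∑ i ∈ Finset.range n, Y i) ω := by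
        exact mul_le_mul_of_nonneg_right (le_abs_self t) hsum0
    _ ≤ |t| * n := mul_le_mul_of_nonneg_left hsumn (abs_nonneg t)

theorem chernoff_upper {Y : ℕ → Ω → ℝ} (hmeas : ∀ i, Measurable (Y i))
    (hindep : iIndepFun Y ℙ)
    (h01 : ∀ i ω, Y i ω ∈ Set.Icc (0 : ℝ) 1) {m : ℝ} (hm : ∀ i, ∫ ω, Y i ω ∂ℙ = m)
    (n : ℕ) {δ : ℝ} (hδ : 0 < δ) (hδ1 : δ ≤ 1) :
    (ℙ {ω | (1 + δ) * ((n : ℝ) * m) ≤ ∑ i ∈ Finset.range n, Y i ω}).toReal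
      ≤ Real.exp (-(δ ^ 2 / 4) * ((n : ℝ) * m)) := by
  have hm0 : 0 ≤ m := by
    rw [← hm 0]; exact integral_nonneg fun ω => (h01 0 ω).1
  have hnm0 : 0 ≤ (n : ℝ) * m := by positivity
  set t : ℝ := δ / 2 with ht_def
  have ht : 0 ≤ t := by positivity
  have habs : |t| ≤ 1 := by rw [abs_of_nonneg ht]; simp only [ht_def]; linarith
  have key := measure_ge_le_exp_mul_mgf (μ := ℙ) (X := ∑ i ∈ Finset.range n, Y i)
    ((1 + δ) * ((n : ℝ) * m)) ht (integrable_exp_sum_bdd hmeas h01 n t)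
  have hset : {ω | (1 + δ) * ((n : ℝ) * m) ≤ (∑ i ∈ Finset.range n, Y i) ω}
      = {ω | (1 + δ) * ((n : ℝ) * m) ≤ ∑ i ∈ Finset.range n, Y i ω} := by
    ext ω; simp [Finset.sum_apply]
  rw [hset] at key
  refine key.trans ?_
  have hmgf := chernoff_mgf_sum hmeas hindep h01 hm n t
  calc Real.exp (-t * ((1 + δ) * ((n : ℝ) * m))) * mgf (∑ i ∈ Finset.range n, Y i) ℙ t
      ≤ Real.exp (-t * ((1 + δ) * ((n : ℝ) * m))) * Real.exp ((n : ℝ) * m * (Real.exp t - 1)) := by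
        exact mul_le_mul_of_nonneg_left hmgf (Real.exp_pos _).le
    _ = Real.exp (-t * ((1 + δ) * ((n : ℝ) * m)) + (n : ℝ) * m * (Real.exp t - 1)) :=
        (Real.exp_add _ _).symm
    _ ≤ Real.exp (-(δ ^ 2 / 4) * ((n : ℝ) * m)) := by
        apply Real.exp_le_exp.2
        have hexp : Real.exp t - 1 ≤ t + t ^ 2 := by linarith [exp_quad_bound habs]
        have : -t * ((1 + δ) * ((n : ℝ) * m)) + (n : ℝ) * m * (Real.exp t - 1)
            ≤ (n : ℝ) * m * (-t * (1 + δ) + (t + t ^ 2)) := by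
          have := mul_le_mul_of_nonneg_left hexp hnm0
          nlinarith
        refine this.trans ?_
        have : -t * (1 + δ) + (t + t ^ 2) = -(δ ^ 2 / 4) := by
          simp only [ht_def]; ring
        rw [this]; ring_nf; rfl

theorem chernoff_lower {Y : ℕ → Ω → ℝ} (hmeas : ∀ i, Measurable (Y i))
    (hindep : iIndepFun Y ℙ)
    (h01 : ∀ i ω, Y i ω ∈ Set.Icc (0 : ℝ) 1) {m : ℝ} (hm : ∀ i, ∫ ω, Y i ω ∂ℙ = m)
    (n : ℕ) {δ : ℝ} (hδ : 0 < δ) (hδ1 : δ ≤ 1) :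
    (ℙ {ω | ∑ i ∈ Finset.range n, Y i ω ≤ (1 - δ) * ((n : ℝ) * m)}).toReal
      ≤ Real.exp (-(δ ^ 2 / 4) * ((n : ℝ) * m)) := by
  have hm0 : 0 ≤ m := by
    rw [← hm 0]; exact integral_nonneg fun ω => (h01 0 ω).1
  have hnm0 : 0 ≤ (n : ℝ) * m := by positivity
  set t : ℝ := -(δ / 2) with ht_def
  have ht : t ≤ 0 := neg_nonpos.mpr (by positivity)
  have habs : |t| ≤ 1 := by rw [ht_def, abs_neg, abs_of_nonneg (by positivity : (0:ℝ) ≤ δ/2)]; linarith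
  have key := measure_le_le_exp_mul_mgf (μ := ℙ) (X := ∑ i ∈ Finset.range n, Y i)
    ((1 - δ) * ((n : ℝ) * m)) ht (integrable_exp_sum_bdd hmeas h01 n t)
  have hset : {ω | (∑ i ∈ Finset.range n, Y i) ω ≤ (1 - δ) * ((n : ℝ) * m)}
      = {ω | ∑ i ∈ Finset.range n, Y i ω ≤ (1 - δ) * ((n : ℝ) * m)} := by
    ext ω; simp [Finset.sum_apply]
  rw [hset] at key
  refine key.trans ?_
  have hmgf := chernoff_mgf_sum hmeas hindep h01 hm n t
  calc Real.exp (-t * ((1 - δ) * ((n : ℝ) * m))) * mgf (∑ i ∈ Finset.range n, Y i) ℙ t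
      ≤ Real.exp (-t * ((1 - δ) * ((n : ℝ) * m))) * Real.exp ((n : ℝ) * m * (Real.exp t - 1)) :=
        mul_le_mul_of_nonneg_left hmgf (Real.exp_pos _).le
    _ = Real.exp (-t * ((1 - δ) * ((n : ℝ) * m)) + (n : ℝ) * m * (Real.exp t - 1)) :=
        (Real.exp_add _ _).symm
    _ ≤ Real.exp (-(δ ^ 2 / 4) * ((n : ℝ) * m)) := by
        apply Real.exp_le_exp.2
        have hexp : Real.exp t - 1 ≤ t + t ^ 2 := by linarith [exp_quad_bound habs]
        have h1 : -t * ((1 - δ) * ((n : ℝ) * m)) + (n : ℝ) * m * (Real.exp t - 1)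
            ≤ (n : ℝ) * m * (-t * (1 - δ) + (t + t ^ 2)) := by
          have := mul_le_mul_of_nonneg_left hexp hnm0
          nlinarith
        refine h1.trans ?_
        have h2 : -t * (1 - δ) + (t + t ^ 2) = -(δ ^ 2 / 4) := by
          simp only [ht_def]; ring
        rw [h2]; ring_nf; rfl

end Chernoff


lemma core_ineq (d : ℕ) (hd : 0 < d) :
    (1 + 1/(16*((d:ℝ)+1)^2))^2 * ((d:ℝ)*((d:ℝ)+2))
      ≤ (1 - 1/(2*((d:ℝ)+1)^2)) * (1 - 1/(16*((d:ℝ)+1)^2))^2 * ((d:ℝ)+1)^2 := by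
  have hd1 : (1:ℝ) ≤ d := Nat.one_le_cast.mpr hd
  set x := (d:ℝ) with hx
  have hxpos : 0 < (x+1)^2 := by positivity
  set t := 1/(x+1)^2 with ht_def
  have htpos : 0 < t := by positivity
  have ht4 : t ≤ 1/4 := by
    rw [ht_def, div_le_div_iff₀ hxpos (by norm_num)]
    nlinarith
  have key : (1+t/16)^2*(1-t) ≤ (1-t/2)*(1-t/16)^2 := by nlinarith [sq_nonneg t, mul_pos htpos htpos]
  have htD : t * (x+1)^2 = 1 := by rw [ht_def]; field_simp
  have e1 : 1/(16*(x+1)^2) = t/16 := by rw [ht_def]; field_simp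
  have e2 : 1/(2*(x+1)^2) = t/2 := by rw [ht_def]; field_simp
  have e3 : x*(x+2) = (1-t)*(x+1)^2 := by nlinarith [htD]
  rw [e1, e2, e3]
  calc (1+t/16)^2 * ((1-t)*(x+1)^2) = ((1+t/16)^2*(1-t))*(x+1)^2 := by ring
    _ ≤ ((1-t/2)*(1-t/16)^2)*(x+1)^2 := mul_le_mul_of_nonneg_right key (by positivity)
    _ = (1-t/2)*(1-t/16)^2*(x+1)^2 := by ring



lemma polar_moment (d : ℕ) (hd : 0 < d) (r : ℝ) (hr : 0 < r) (k : ℕ) :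
    ∫ x : EuclideanSpace ℝ (Fin d), (if ‖x‖ ≤ r then (‖x‖ / r) ^ k else 0)
      = (d : ℝ) * (volume (ball (0 : EuclideanSpace ℝ (Fin d)) 1)).toReal * r ^ d / (d + k) := by
  haveI : Nontrivial (EuclideanSpace ℝ (Fin d)) :=
    Module.nontrivial_of_finrank_pos (R := ℝ) (by rw [finrank_euclideanSpace_fin]; exact hd)
  have hdim : Module.finrank ℝ (EuclideanSpace ℝ (Fin d)) = d := finrank_euclideanSpace_fin
  have key := integral_fun_norm_addHaar (volume : Measure (EuclideanSpace ℝ (Fin d)))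
    (fun y => if y ≤ r then (y / r) ^ k else 0)
  rw [hdim] at key
  rw [key]
  have hJ : ∫ y in Set.Ioi (0:ℝ), y ^ (d - 1) • (if y ≤ r then (y / r) ^ k else 0)
      = r ^ d / (d + k) := by
    have h1 : ∀ y : ℝ, y ^ (d - 1) • (if y ≤ r then (y / r) ^ k else 0)
        = Set.indicator (Set.Iic r) (fun y => y ^ (d - 1 + k) / r ^ k) y := by
      intro y
      rw [Set.indicator_apply, smul_eq_mul]
      by_cases h : y ≤ r
      · simp only [h, if_pos, Set.mem_Iic, if_true]
        rw [div_pow, pow_add]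
        ring
      · simp [h, Set.mem_Iic]
    simp_rw [h1]
    rw [setIntegral_indicator measurableSet_Iic, Set.Ioi_inter_Iic]
    rw [integral_div]
    rw [← intervalIntegral.integral_of_le hr.le, integral_pow]
    have hcast : ((d - 1 + k : ℕ) : ℝ) + 1 = (d : ℝ) + k := by
      push_cast [Nat.cast_sub hd]
      ring
    rw [hcast]
    have hzero : (0:ℝ) ^ (d - 1 + k + 1) = 0 := by
      exact zero_pow (Nat.succ_ne_zero _)
    rw [hzero, sub_zero]
    have hpow : r ^ (d - 1 + k + 1) = r ^ d * r ^ k := by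
      rw [← pow_add]
      congr 1
      omega
    rw [hpow]
    field_simp
  rw [hJ, nsmul_eq_mul, smul_eq_mul]
  simp only [measureReal_def]; ring

lemma ball_meas (d : ℕ) (xstar : EuclideanSpace ℝ (Fin d)) (r : ℝ) (k : ℕ) :
    Measurable fun x => if dist x xstar ≤ r then (dist x xstar / r) ^ k else 0 := by
  have h1 : Measurable fun x : EuclideanSpace ℝ (Fin d) => dist x xstar :=
    measurable_id'.dist measurable_const
  exact Measurable.ite (measurableSet_le h1 measurable_const)
    ((h1.div_const r).pow_const k) measurable_const

lemma density_moment (d : ℕ) (hd : 0 < d) (xstar : EuclideanSpace ℝ (Fin d)) (Rr : ℝ)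
    (μ : EuclideanSpace ℝ (Fin d) → ℝ) (hμmeas : Measurable μ) (hμnn : ∀ x, 0 ≤ μ x)
    (u : ℝ) (hunif : ∀ x ∈ closedBall xstar Rr, μ x = u)
    (r : ℝ) (hr : 0 < r) (hrR : r ≤ Rr) (k : ℕ) :
    ∫ x, (if dist x xstar ≤ r then (dist x xstar / r) ^ k else 0)
        ∂(volume.withDensity fun x => ENNReal.ofReal (μ x))
      = u * ((d : ℝ) * (volume (ball (0 : EuclideanSpace ℝ (Fin d)) 1)).toReal * r ^ d
          / ((d : ℝ) + k)) := by
  have hwd : (volume.withDensity fun x => ENNReal.ofReal (μ x))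
      = volume.withDensity (fun x => ((Real.toNNReal (μ x) : NNReal) : ENNReal)) := rfl
  rw [hwd, integral_withDensity_eq_integral_smul hμmeas.real_toNNReal]
  have hpt : ∀ x : EuclideanSpace ℝ (Fin d),
      Real.toNNReal (μ x) • (if dist x xstar ≤ r then (dist x xstar / r) ^ k else 0)
        = u * (if dist x xstar ≤ r then (dist x xstar / r) ^ k else 0) := by
    intro x
    rw [NNReal.smul_def, Real.coe_toNNReal _ (hμnn x)]
    by_cases h : dist x xstar ≤ r
    · rw [hunif x (mem_closedBall.mpr (h.trans hrR)), smul_eq_mul]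
    · simp [h]
  rw [integral_congr_ae (Filter.Eventually.of_forall hpt), integral_const_mul]
  congr 1
  have htrans : ∀ x : EuclideanSpace ℝ (Fin d),
      (if dist x xstar ≤ r then (dist x xstar / r) ^ k else 0)
        = (fun z : EuclideanSpace ℝ (Fin d) => if ‖z‖ ≤ r then (‖z‖ / r) ^ k else 0)
            (x - xstar) := by
    intro x
    simp only [dist_eq_norm]
  rw [integral_congr_ae (Filter.Eventually.of_forall htrans),
    integral_sub_right_eq_self (μ := volume)
      (fun z : EuclideanSpace ℝ (Fin d) => if ‖z‖ ≤ r then (‖z‖ / r) ^ k else 0) xstar]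
  exact polar_moment d hd r hr k





set_option maxHeartbeats 2000000 in
/-- Suppose `⌊β/2⌋ = 1` (so that `ζ_n` reduces to
`(Σ_i r_i)²/(Σ_i r_i²)`) and the covariate `X` is uniformly distributed, at least over the
ball `B_R(X*)`.  Then condition (C-3) holds with `φ = 1 − 1/(2(d+1)²)`: with `ζ_n` computed
from the `N_n` distances `r_i = ‖X_i − X*‖₂` not exceeding `r̃_n`, there exist constants
`c, C, τ > 0` such that `P(ζ_n ≥ (1 − 1/(2(d+1)²)) N_n) ≤ C exp(−c n^τ)` for all `n`. -/
theorem stmt2 (d : ℕ) (hd : 0 < d) (xstar : EuclideanSpace ℝ (Fin d)) (R : ℝ)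
    (hR : R ∈ Set.Ioo (0 : ℝ) 1)
    (Ω : Type*) [MeasureSpace Ω] [IsProbabilityMeasure (ℙ : Measure Ω)]
    (X : ℕ → Ω → EuclideanSpace ℝ (Fin d)) (hXmeas : ∀ i, Measurable (X i))
    (hindep : iIndepFun X ℙ)
    (μ : EuclideanSpace ℝ (Fin d) → ℝ) (hμmeas : Measurable μ) (hμnn : ∀ x, 0 ≤ μ x)
    (hlaw : ∀ i, Measure.map (X i) ℙ = volume.withDensity fun x => ENNReal.ofReal (μ x))
    -- `X` is uniformly distributed, at least over the ball `B_R(X*)`: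
    (u : ℝ) (hu : 0 < u) (hunif : ∀ x ∈ closedBall xstar R, μ x = u)
    -- the sequence of radii:
    (rt : ℕ → ℝ) (hrtpos : ∀ n, 0 < rt n) (hrt0 : Tendsto rt atTop (nhds 0))
    (ν : ℝ) (hν : 0 < ν)
    (hrtinf : Tendsto (fun n : ℕ => (n : ℝ) ^ ((1 : ℝ) - ν) * rt n ^ d) atTop atTop) :
    ∃ c : ℝ, 0 < c ∧ ∃ C : ℝ, 0 < C ∧ ∃ τ : ℝ, 0 < τ ∧ ∀ n : ℕ,
      ℙ {ω | (1 - 1 / (2 * ((d : ℝ) + 1) ^ 2)) *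
            ((((Finset.range n).filter fun i => dist (X i ω) xstar ≤ rt n).card : ℕ) : ℝ) ≤
          (∑ i ∈ (Finset.range n).filter fun i => dist (X i ω) xstar ≤ rt n,
              dist (X i ω) xstar) ^ 2 /
            ∑ i ∈ (Finset.range n).filter fun i => dist (X i ω) xstar ≤ rt n,
              dist (X i ω) xstar ^ 2} ≤
        ENNReal.ofReal (C * Real.exp (-c * (n : ℝ) ^ τ)) := by
  classical
  obtain ⟨hR0, hR1⟩ := hR
  set V := (volume (ball (0 : EuclideanSpace ℝ (Fin d)) 1)).toReal with hV_def
  have hV : 0 < V := by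
    rw [hV_def, ENNReal.toReal_pos_iff]
    exact ⟨measure_ball_pos _ _ one_pos, measure_ball_lt_top⟩
  have hd1 : (1:ℝ) ≤ (d:ℝ) := Nat.one_le_cast.mpr hd
  set D := ((d:ℝ)+1)^2 with hD_def
  have hD4 : (4:ℝ) ≤ D := by rw [hD_def]; nlinarith
  have hDpos : (0:ℝ) < D := by linarith
  set δ := 1/(16*D) with hδ_def
  have hδpos : 0 < δ := by positivity
  have hδsmall : δ ≤ 1/64 := by
    rw [hδ_def, div_le_div_iff₀ (by positivity) (by norm_num)]
    linarith
  have hδ1 : δ ≤ 1 := hδsmall.trans (by norm_num)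
  set c := δ^2 * (u*V) / 12 with hc_def
  have hcpos : 0 < c := by positivity
  clear_value c
  have hev : ∀ᶠ n : ℕ in atTop,
      rt n ≤ R ∧ 1 ≤ (n:ℝ)^((1:ℝ)-ν) * rt n ^ d ∧ 1 ≤ n := by
    filter_upwards [hrt0.eventually_lt_const hR0, hrtinf.eventually_ge_atTop 1,
      eventually_ge_atTop 1] with n h1 h2 h3
    exact ⟨h1.le, h2, h3⟩
  obtain ⟨N₀, hN₀⟩ := eventually_atTop.mp hev
  set C := 3 * Real.exp (c * (N₀:ℝ)^ν) with hC_def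
  have hCpos : 0 < C := by positivity
  refine ⟨c, hcpos, C, hCpos, ν, hν, fun n => ?_⟩
  by_cases hn : n < N₀
  · -- small n : trivial bound
    have h1 : (1:ℝ) ≤ C * Real.exp (-c * (n:ℝ)^ν) := by
      rw [hC_def, mul_assoc, ← Real.exp_add]
      have hnN : ((n:ℝ))^ν ≤ ((N₀:ℝ))^ν :=
        Real.rpow_le_rpow (n.cast_nonneg) (Nat.cast_le.mpr hn.le) hν.le
      have h2 : (0:ℝ) ≤ c * (N₀:ℝ)^ν + -c * (n:ℝ)^ν := by nlinarith
      nlinarith [Real.one_le_exp h2]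
    calc ℙ _ ≤ 1 := prob_le_one
      _ ≤ ENNReal.ofReal (C * Real.exp (-c * (n:ℝ)^ν)) := by
          rw [← ENNReal.ofReal_one]; exact ENNReal.ofReal_le_ofReal h1
  · -- large n
    push_neg at hn
    obtain ⟨hrR, hn1r, hn1⟩ := hN₀ n hn
    have hn1' : (1:ℝ) ≤ (n:ℝ) := Nat.one_le_cast.mpr hn1
    set r := rt n with hr_def
    have hr : 0 < r := hrtpos n
    clear_value r
    set f : ℕ → EuclideanSpace ℝ (Fin d) → ℝ :=
      fun k x => if dist x xstar ≤ r then (dist x xstar / r)^k else 0 with hf_def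
    have hfmeas : ∀ k, Measurable (f k) := fun k => ball_meas d xstar r k
    have hf01 : ∀ k x, f k x ∈ Set.Icc (0:ℝ) 1 := by
      intro k x
      simp only [hf_def]
      by_cases h : dist x xstar ≤ r
      · simp only [h, if_true]
        refine ⟨by positivity, ?_⟩
        exact pow_le_one₀ (by positivity) ((div_le_one hr).mpr h)
      · simp [h]
    set m : ℕ → ℝ := fun k => u * ((d:ℝ) * V * r^d / ((d:ℝ)+(k:ℝ))) with hm_def
    clear_value V
    have hmpos : ∀ k, 0 < m k := by
      intro k
      have : (0:ℝ) < (d:ℝ)+(k:ℝ) := by positivity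
      rw [hm_def]; positivity
    have hindepk : ∀ k : ℕ,
        iIndepFun (fun i ω => f k (X i ω)) ℙ := by
      intro k
      exact hindep.comp (fun _ => f k) (fun _ => hfmeas k)
    have hmean : ∀ (k i : ℕ), ∫ ω, f k (X i ω) ∂ℙ = m k := by
      intro k i
      rw [← integral_map (hXmeas i).aemeasurable (hfmeas k).aestronglyMeasurable, hlaw i]
      rw [hm_def]
      simpa [hV_def] using density_moment d hd xstar R μ hμmeas hμnn u hunif r hr hrR k
    -- the three tail events
    set A0 : Set Ω := {ω | ∑ i ∈ Finset.range n, f 0 (X i ω) ≤ (1-δ)*((n:ℝ)*m 0)} with hA0_def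
    set A1 : Set Ω := {ω | (1+δ)*((n:ℝ)*m 1) ≤ ∑ i ∈ Finset.range n, f 1 (X i ω)} with hA1_def
    set A2 : Set Ω := {ω | ∑ i ∈ Finset.range n, f 2 (X i ω) ≤ (1-δ)*((n:ℝ)*m 2)} with hA2_def
    have hfXmeas : ∀ (k i : ℕ), Measurable fun ω => f k (X i ω) :=
      fun k i => (hfmeas k).comp (hXmeas i)
    have hch0 : (ℙ A0).toReal ≤ Real.exp (-(δ^2/4)*((n:ℝ)*m 0)) :=
      chernoff_lower (hfXmeas 0) (hindepk 0) (fun i ω => hf01 0 _) (hmean 0) n hδpos hδ1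
    have hch1 : (ℙ A1).toReal ≤ Real.exp (-(δ^2/4)*((n:ℝ)*m 1)) :=
      chernoff_upper (hfXmeas 1) (hindepk 1) (fun i ω => hf01 1 _) (hmean 1) n hδpos hδ1
    have hch2 : (ℙ A2).toReal ≤ Real.exp (-(δ^2/4)*((n:ℝ)*m 2)) :=
      chernoff_lower (hfXmeas 2) (hindepk 2) (fun i ω => hf01 2 _) (hmean 2) n hδpos hδ1
    -- exponent comparison
    have hexp : ∀ k : ℕ, k ≤ 2 → c * (n:ℝ)^ν ≤ (δ^2/4) * ((n:ℝ)*m k) := by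
      intro k hk
      have hnr : (n:ℝ)^ν ≤ (n:ℝ) * r^d := by
        have hn0 : (0:ℝ) < (n:ℝ) := by linarith
        have h1 : (n:ℝ) * r^d = (n:ℝ)^ν * ((n:ℝ)^((1:ℝ)-ν) * r^d) := by
          rw [← mul_assoc, ← Real.rpow_add hn0]
          norm_num
        rw [h1]
        nlinarith [Real.rpow_pos_of_pos hn0 ν, hn1r]
      have hmk : u*V*r^d/3 ≤ m k := by
        have hk2 : (k:ℝ) ≤ 2 := by exact_mod_cast hk
        have hdk : (0:ℝ) < (d:ℝ)+(k:ℝ) := by positivity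
        have h4 : V*r^d/3 ≤ (d:ℝ)*V*r^d/((d:ℝ)+(k:ℝ)) := by
          rw [div_le_div_iff₀ (by norm_num) hdk]
          nlinarith [mul_nonneg (mul_pos hV (pow_pos hr d)).le
            (show (0:ℝ) ≤ 2*(d:ℝ)-(k:ℝ) by linarith)]
        calc u*V*r^d/3 = u*(V*r^d/3) := by ring
          _ ≤ u*((d:ℝ)*V*r^d/((d:ℝ)+(k:ℝ))) := mul_le_mul_of_nonneg_left h4 hu.le
          _ = m k := by simp only [hm_def]
      calc c * (n:ℝ)^ν = (δ^2/4) * ((n:ℝ)^ν * (u*V/3)) := by rw [hc_def]; ring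
        _ ≤ (δ^2/4) * ((n:ℝ)*m k) := by
            have h3 : (n:ℝ)^ν * (u*V/3) ≤ (n:ℝ) * m k := by
              calc (n:ℝ)^ν * (u*V/3) ≤ ((n:ℝ)*r^d) * (u*V/3) := by
                    nlinarith [mul_pos hu hV]
                _ = (n:ℝ) * (u*V*r^d/3) := by ring
                _ ≤ (n:ℝ) * m k := by nlinarith [hmk]
            nlinarith [sq_nonneg δ]
    -- derived positivity facts
    have hn0 : (0:ℝ) < (n:ℝ) := by linarith
    have hδ' : (0:ℝ) < 1 - δ := by linarith
    have hε' : (0:ℝ) < 1 - 1/(2*D) := by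
      have h8 : 1/(2*D) ≤ 1/8 := by
        rw [div_le_div_iff₀ (by positivity) (by norm_num)]; linarith
      linarith
    have hnm0pos : 0 < (1-δ)*((n:ℝ)*m 0) := mul_pos hδ' (mul_pos hn0 (hmpos 0))
    have hnm2pos : 0 < (1-δ)*((n:ℝ)*m 2) := mul_pos hδ' (mul_pos hn0 (hmpos 2))
    -- key algebraic inequality
    have hcore := core_ineq d hd
    rw [← hD_def, ← hδ_def] at hcore
    have hQpos : (0:ℝ) < u*(d:ℝ)*V*r^d := by
      have hdpos : (0:ℝ) < (d:ℝ) := by linarith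
      positivity
    have hm0' : m 0 = u*(d:ℝ)*V*r^d/(d:ℝ) := by simp only [hm_def]; push_cast; ring
    have hm1' : m 1 = u*(d:ℝ)*V*r^d/((d:ℝ)+1) := by simp only [hm_def]; push_cast; ring
    have hm2' : m 2 = u*(d:ℝ)*V*r^d/((d:ℝ)+2) := by simp only [hm_def]; push_cast; ring
    have hdne : ((d:ℝ)) ≠ 0 := by linarith
    have hd1ne : ((d:ℝ)+1) ≠ 0 := by linarith
    have hd2ne : ((d:ℝ)+2) ≠ 0 := by linarith
    have hkey0 : (1+δ)^2 * (m 1)^2 ≤ (1-1/(2*D)) * ((1-δ)^2 * (m 0 * m 2)) := by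
      set Q := u*(d:ℝ)*V*r^d with hQ_def
      set Z := ((d:ℝ)+1)^2 * ((d:ℝ)*((d:ℝ)+2)) with hZ_def
      have hZpos : (0:ℝ) < Z := by
        rw [hZ_def]
        have : (0:ℝ) < (d:ℝ) := by linarith
        positivity
      have hQZ : (0:ℝ) ≤ Q^2/Z := by positivity
      have h := mul_le_mul_of_nonneg_right hcore hQZ
      calc (1+δ)^2 * (m 1)^2
          = ((1+δ)^2*((d:ℝ)*((d:ℝ)+2)))*(Q^2/Z) := by
            rw [hm1', hQ_def, hZ_def]; field_simp
        _ ≤ ((1-1/(2*D))*(1-δ)^2*D)*(Q^2/Z) := h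
        _ = (1-1/(2*D)) * ((1-δ)^2 * (m 0 * m 2)) := by
            rw [hm0', hm2', hQ_def, hZ_def, hD_def]; field_simp
    have hkey' : ((1+δ)*((n:ℝ)*m 1))^2
        ≤ (1-1/(2*D))*(((1-δ)*((n:ℝ)*m 0))*((1-δ)*((n:ℝ)*m 2))) := by
      calc ((1+δ)*((n:ℝ)*m 1))^2 = (n:ℝ)^2 * ((1+δ)^2*(m 1)^2) := by ring
        _ ≤ (n:ℝ)^2 * ((1-1/(2*D)) * ((1-δ)^2 * (m 0 * m 2))) :=
            mul_le_mul_of_nonneg_left hkey0 (sq_nonneg _)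
        _ = (1-1/(2*D))*(((1-δ)*((n:ℝ)*m 0))*((1-δ)*((n:ℝ)*m 2))) := by ring
    -- event inclusion
    have hsub : {ω | (1 - 1 / (2 * D)) *
            ((((Finset.range n).filter fun i => dist (X i ω) xstar ≤ r).card : ℕ) : ℝ) ≤
          (∑ i ∈ (Finset.range n).filter fun i => dist (X i ω) xstar ≤ r,
              dist (X i ω) xstar) ^ 2 /
            ∑ i ∈ (Finset.range n).filter fun i => dist (X i ω) xstar ≤ r,
              dist (X i ω) xstar ^ 2} ⊆ A0 ∪ A1 ∪ A2 := by
      intro ω hω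
      by_contra hmem
      simp only [Set.mem_union, hA0_def, hA1_def, hA2_def, Set.mem_setOf_eq, not_or,
        not_le] at hmem
      obtain ⟨⟨h0, h1⟩, h2⟩ := hmem
      simp only [Set.mem_setOf_eq] at hω
      set S0 := ∑ i ∈ Finset.range n, f 0 (X i ω) with hS0_def
      set S1 := ∑ i ∈ Finset.range n, f 1 (X i ω) with hS1_def
      set S2 := ∑ i ∈ Finset.range n, f 2 (X i ω) with hS2_def
      have hcard : ((((Finset.range n).filter fun i => dist (X i ω) xstar ≤ r).card : ℕ) : ℝ)
          = S0 := by
        rw [Finset.card_filter]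
        push_cast
        rw [hS0_def]
        refine Finset.sum_congr rfl fun i _ => ?_
        simp only [hf_def, pow_zero]
      have hsum1 : (∑ i ∈ (Finset.range n).filter fun i => dist (X i ω) xstar ≤ r,
          dist (X i ω) xstar) = r * S1 := by
        rw [Finset.sum_filter, hS1_def, Finset.mul_sum]
        refine Finset.sum_congr rfl fun i _ => ?_
        simp only [hf_def, pow_one]
        by_cases h : dist (X i ω) xstar ≤ r
        · simp only [h, if_true]
          field_simp
        · simp [h]
      have hsum2 : (∑ i ∈ (Finset.range n).filter fun i => dist (X i ω) xstar ≤ r,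
          dist (X i ω) xstar ^ 2) = r^2 * S2 := by
        rw [Finset.sum_filter, hS2_def, Finset.mul_sum]
        refine Finset.sum_congr rfl fun i _ => ?_
        simp only [hf_def, div_pow]
        by_cases h : dist (X i ω) xstar ≤ r
        · simp only [h, if_true]
          field_simp
        · simp [h]
      rw [hcard, hsum1, hsum2] at hω
      have hS0pos : 0 < S0 := lt_trans hnm0pos h0
      have hS2pos : 0 < S2 := lt_trans hnm2pos h2
      have hS1nn : 0 ≤ S1 := by
        rw [hS1_def]
        exact Finset.sum_nonneg fun i _ => (hf01 1 _).1
      have hr2S2 : 0 < r^2*S2 := by positivity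
      have hcontra : (r*S1)^2 / (r^2*S2) < (1 - 1/(2*D)) * S0 := by
        rw [div_lt_iff₀ hr2S2]
        have e0 : S1^2 ≤ ((1+δ)*((n:ℝ)*m 1))^2 := pow_le_pow_left₀ hS1nn h1.le 2
        have e1 : (r*S1)^2 ≤ r^2 * ((1+δ)*((n:ℝ)*m 1))^2 := by
          calc (r*S1)^2 = r^2*S1^2 := by ring
            _ ≤ r^2 * ((1+δ)*((n:ℝ)*m 1))^2 := mul_le_mul_of_nonneg_left e0 (sq_nonneg r)
        have e3 : (1-1/(2*D))*(((1-δ)*((n:ℝ)*m 0)) * ((1-δ)*((n:ℝ)*m 2)))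
            < (1-1/(2*D))*(S0*S2) :=
          mul_lt_mul_of_pos_left (mul_lt_mul'' h0 h2 hnm0pos.le hnm2pos.le) hε'
        have e2 : r^2 * ((1+δ)*((n:ℝ)*m 1))^2 < (1-1/(2*D))*S0*(r^2*S2) := by
          calc r^2*((1+δ)*((n:ℝ)*m 1))^2
              ≤ r^2*((1-1/(2*D))*(((1-δ)*((n:ℝ)*m 0))*((1-δ)*((n:ℝ)*m 2)))) :=
                mul_le_mul_of_nonneg_left hkey' (sq_nonneg r)
            _ < r^2*((1-1/(2*D))*(S0*S2)) := mul_lt_mul_of_pos_left e3 (by positivity)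
            _ = (1-1/(2*D))*S0*(r^2*S2) := by ring
        linarith [e1.trans_lt e2]
      exact absurd hω (not_le.mpr hcontra)
    -- union bound and conclusion
    have hbound : ∀ (A : Set Ω) (k : ℕ), k ≤ 2 →
        (ℙ A).toReal ≤ Real.exp (-(δ^2/4)*((n:ℝ)*m k)) →
        ℙ A ≤ ENNReal.ofReal (Real.exp (-c*(n:ℝ)^ν)) := by
      intro A k hk hA
      rw [← ENNReal.ofReal_toReal (measure_ne_top ℙ A)]
      apply ENNReal.ofReal_le_ofReal
      refine hA.trans ?_
      apply Real.exp_le_exp.2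
      have := hexp k hk
      linarith
    have hC3 : 3 ≤ C := by
      rw [hC_def]
      nlinarith [Real.one_le_exp (show (0:ℝ) ≤ c*(N₀:ℝ)^ν by positivity)]
    calc ℙ _ ≤ ℙ (A0 ∪ A1 ∪ A2) := measure_mono hsub
      _ ≤ ℙ (A0 ∪ A1) + ℙ A2 := measure_union_le _ _
      _ ≤ (ℙ A0 + ℙ A1) + ℙ A2 := add_le_add (measure_union_le _ _) le_rfl
      _ ≤ (ENNReal.ofReal (Real.exp (-c*(n:ℝ)^ν)) + ENNReal.ofReal (Real.exp (-c*(n:ℝ)^ν)))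
            + ENNReal.ofReal (Real.exp (-c*(n:ℝ)^ν)) :=
          add_le_add (add_le_add (hbound _ 0 (by norm_num) hch0)
            (hbound _ 1 (by norm_num) hch1)) (hbound _ 2 (by norm_num) hch2)
      _ = ENNReal.ofReal (3 * Real.exp (-c*(n:ℝ)^ν)) := by
          rw [← ENNReal.ofReal_add (Real.exp_pos _).le (Real.exp_pos _).le,
            ← ENNReal.ofReal_add (by positivity) (Real.exp_pos _).le]
          ring_nf
      _ ≤ ENNReal.ofReal (C * Real.exp (-c*(n:ℝ)^ν)) := by
          apply ENNReal.ofReal_le_ofReal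
          nlinarith [Real.exp_pos (-c*(n:ℝ)^ν)]
end

section
/- Under conditions (C-1) and (C-3), there exist constants c, c', c'' > 0 such that the event E_n (that N_n ≥ 1 + ⌊β/2⌋ and ζ_n ≤ φ N_n) satisfies P(¬E_n) ≤ 2 exp(−c n r̃_n^d) + c' exp(−c'' n^τ) for all sufficiently large n. -/
open MeasureTheory ProbabilityTheory Metric Finset Filter

noncomputable section

/-- Indices (among the first `n` samples) whose covariate lies within distance `rt` of the
query `xstar`; its cardinality is `N_n`. -/
def nearIdx {d : ℕ} {Ω : Type*} (xstar : EuclideanSpace ℝ (Fin d))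
    (X : ℕ → Ω → EuclideanSpace ℝ (Fin d)) (rt : ℝ) (n : ℕ) (ω : Ω) : Finset ℕ :=
  (Finset.range n).filter fun i => dist (X i ω) xstar ≤ rt

/-- The column of the design matrix `R̃_n` of exponent `2(c+1)`, zero-extended over all `n`
samples: entry `i` equals `r_i^{2(c+1)}` if `r_i = ‖X_i − X*‖₂ ≤ rt`, and `0` otherwise. -/
def designCol {d : ℕ} {Ω : Type*} (xstar : EuclideanSpace ℝ (Fin d))
    (X : ℕ → Ω → EuclideanSpace ℝ (Fin d)) (rt : ℝ) (n : ℕ) (ω : Ω) (c : ℕ) :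
    EuclideanSpace ℝ (Fin n) :=
  (EuclideanSpace.equiv (Fin n) ℝ).symm fun i =>
    if dist (X i ω) xstar ≤ rt then dist (X i ω) xstar ^ (2 * (c + 1)) else 0

/-- The all-ones vector `1_{N_n}`, zero-extended over all `n` samples. -/
def oneVec {d : ℕ} {Ω : Type*} (xstar : EuclideanSpace ℝ (Fin d))
    (X : ℕ → Ω → EuclideanSpace ℝ (Fin d)) (rt : ℝ) (n : ℕ) (ω : Ω) :
    EuclideanSpace ℝ (Fin n) :=
  (EuclideanSpace.equiv (Fin n) ℝ).symm fun i =>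
    if dist (X i ω) xstar ≤ rt then 1 else 0

/-- `ζ_n = ⟨1_{N_n}, P_{R̃_n} 1_{N_n}⟩`, where `P_{R̃_n}` is the orthogonal projection onto
the column space of the design matrix `R̃_n` (the `N_n × ωdeg` matrix with `(i,c)` entry
`r_i^{2c}`, `c = 1, …, ωdeg`). -/
def zetaProj {d : ℕ} {Ω : Type*} (ωdeg : ℕ) (xstar : EuclideanSpace ℝ (Fin d))
    (X : ℕ → Ω → EuclideanSpace ℝ (Fin d)) (rt : ℝ) (n : ℕ) (ω : Ω) : ℝ :=
  inner ℝ (oneVec xstar X rt n ω)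
    ((Submodule.orthogonalProjectionOnto
        (Submodule.span ℝ (Set.range fun c : Fin ωdeg => designCol xstar X rt n ω c))
        (oneVec xstar X rt n ω) : EuclideanSpace ℝ (Fin n)))

/-- The event `E_n`: `N_n ≥ 1 + ⌊β/2⌋` and `ζ_n ≤ φ N_n`. -/
def goodEvent {d : ℕ} {Ω : Type*} (ωdeg : ℕ) (φ : ℝ) (xstar : EuclideanSpace ℝ (Fin d))
    (X : ℕ → Ω → EuclideanSpace ℝ (Fin d)) (rt : ℝ) (n : ℕ) (ω : Ω) : Prop :=
  1 + ωdeg ≤ (nearIdx xstar X rt n ω).card ∧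
    zetaProj ωdeg xstar X rt n ω ≤ φ * ((nearIdx xstar X rt n ω).card : ℝ)

/-- Under conditions (C-1) and (C-3), there exist constants
`c, c', c'' > 0` such that the event `E_n` (that `N_n ≥ 1 + ⌊β/2⌋` and `ζ_n ≤ φ N_n`)
satisfies `P(¬E_n) ≤ 2 exp(−c n r̃_n^d) + c' exp(−c'' n^τ)` for all sufficiently large `n`.
Here `⌊β/2⌋ = ⌈β/2⌉ − 1` is the largest integer strictly smaller than `β/2`. -/
theorem stmt7 (d : ℕ) (hd : 0 < d) (xstar : EuclideanSpace ℝ (Fin d)) (R : ℝ)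
    (hR : R ∈ Set.Ioo (0 : ℝ) 1) (β : ℝ) (hβ : 0 < β)
    (Ω : Type*) [MeasureSpace Ω] [IsProbabilityMeasure (ℙ : Measure Ω)]
    (X : ℕ → Ω → EuclideanSpace ℝ (Fin d)) (hXmeas : ∀ i, Measurable (X i))
    (hindep : iIndepFun X ℙ)
    (μ : EuclideanSpace ℝ (Fin d) → ℝ) (hμmeas : Measurable μ) (hμnn : ∀ x, 0 ≤ μ x)
    (hlaw : ∀ i, Measure.map (X i) ℙ = volume.withDensity fun x => ENNReal.ofReal (μ x))
    -- (C-1):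
    (l : ℝ) (hl : 0 < l) (hC1 : ∀ x ∈ closedBall xstar R, l ≤ μ x)
    -- the sequence of radii:
    (rt : ℕ → ℝ) (hrtpos : ∀ n, 0 < rt n) (hrt0 : Tendsto rt atTop (nhds 0))
    (ν : ℝ) (hν : 0 < ν)
    (hrtinf : Tendsto (fun n : ℕ => (n : ℝ) ^ ((1 : ℝ) - ν) * rt n ^ d) atTop atTop)
    -- (C-3):
    (c₀ C₀ τ φ : ℝ) (hc₀ : 0 < c₀) (hC₀ : 0 < C₀) (hτ : 0 < τ) (hφ : φ ∈ Set.Ioo (0 : ℝ) 1)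
    (hC3 : ∀ n : ℕ,
      ℙ {ω | φ * ((nearIdx xstar X (rt n) n ω).card : ℝ) ≤
          zetaProj (⌈β / 2⌉₊ - 1) xstar X (rt n) n ω} ≤
        ENNReal.ofReal (C₀ * Real.exp (-c₀ * (n : ℝ) ^ τ))) :
    ∃ c : ℝ, 0 < c ∧ ∃ c' : ℝ, 0 < c' ∧ ∃ c'' : ℝ, 0 < c'' ∧ ∃ n₀ : ℕ, ∀ n : ℕ, n₀ ≤ n →
      ℙ {ω | ¬ goodEvent (⌈β / 2⌉₊ - 1) φ xstar X (rt n) n ω} ≤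
        ENNReal.ofReal (2 * Real.exp (-c * n * rt n ^ d) + c' * Real.exp (-c'' * (n : ℝ) ^ τ)) := by
  classical
  set k : ℕ := ⌈β / 2⌉₊ - 1 with hk
  set V : ℝ := (volume (ball (0 : EuclideanSpace ℝ (Fin d)) 1)).toReal with hVdef
  have hVpos : 0 < V := ENNReal.toReal_pos (measure_ball_pos volume _ one_pos).ne'
    measure_ball_lt_top.ne
  have hexp : Real.exp (-1) < 1 := by
    have := Real.exp_lt_exp.mpr (show (-1 : ℝ) < 0 by norm_num)
    simpa [Real.exp_zero] using this
  set c : ℝ := (1 - Real.exp (-1)) * (l * V) / 2 with hcdef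
  have hcpos : 0 < c := by
    have h1 : 0 < 1 - Real.exp (-1) := by linarith
    rw [hcdef]
    have := mul_pos hl hVpos
    positivity
  have hev1 : ∀ᶠ n : ℕ in atTop, rt n ≤ R := by
    filter_upwards [hrt0.eventually (eventually_le_nhds hR.1)] with n hn using hn
  have hev2 : ∀ᶠ n : ℕ in atTop, (k : ℝ) ≤ c * ((n : ℝ) * rt n ^ d) := by
    filter_upwards [hrtinf.eventually_ge_atTop ((k : ℝ) / c), eventually_ge_atTop 1]
      with n h1 hn1
    have hn1' : (1 : ℝ) ≤ (n : ℝ) := by exact_mod_cast hn1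
    have hle : (n : ℝ) ^ ((1 : ℝ) - ν) ≤ (n : ℝ) := by
      calc (n : ℝ) ^ ((1 : ℝ) - ν) ≤ (n : ℝ) ^ (1 : ℝ) :=
            Real.rpow_le_rpow_of_exponent_le hn1' (by linarith)
        _ = (n : ℝ) := Real.rpow_one _
    have hrtd : (0 : ℝ) ≤ rt n ^ d := (pow_pos (hrtpos n) d).le
    have h2 : (k : ℝ) / c ≤ (n : ℝ) * rt n ^ d :=
      h1.trans (mul_le_mul_of_nonneg_right hle hrtd)
    calc (k : ℝ) = c * ((k : ℝ) / c) := by field_simp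
      _ ≤ c * ((n : ℝ) * rt n ^ d) := by gcongr
  obtain ⟨n₀, hn₀⟩ := eventually_atTop.mp (hev1.and hev2)
  refine ⟨c, hcpos, C₀, hC₀, c₀, hc₀, n₀, ?_⟩
  intro n hn
  obtain ⟨hRn, hkn⟩ := hn₀ n hn
  have hrpos := hrtpos n
  set r := rt n with hrdef
  set A : ℕ → Set Ω := fun i => {ω | dist (X i ω) xstar ≤ r} with hA
  have hAmeas : ∀ i, MeasurableSet (A i) := fun i =>
    measurableSet_le ((hXmeas i).dist measurable_const) measurable_const
  set Y : ℕ → Ω → ℝ := fun i ω => if dist (X i ω) xstar ≤ r then 1 else 0 with hY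
  have hYmeas : ∀ i, Measurable (Y i) := fun i =>
    Measurable.ite (hAmeas i) measurable_const measurable_const
  have hYindep : iIndepFun Y ℙ := by
    have := hindep.comp
      (fun _ (x : EuclideanSpace ℝ (Fin d)) => if dist x xstar ≤ r then (1 : ℝ) else 0)
      (fun i => Measurable.ite
        (measurableSet_le (measurable_id.dist measurable_const) measurable_const)
        measurable_const measurable_const)
    exact this
  set q : ℝ := l * (r ^ d * V) with hq
  have hqpos : 0 < q := by rw [hq]; positivity
  have hplow : ∀ i, q ≤ (ℙ (A i)).toReal := by
    intro i
    have hmap : ℙ (A i) = ∫⁻ x in closedBall xstar r, ENNReal.ofReal (μ x) := by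
      have hApre : A i = X i ⁻¹' closedBall xstar r := rfl
      rw [hApre, ← Measure.map_apply (hXmeas i) measurableSet_closedBall, hlaw i,
        withDensity_apply _ measurableSet_closedBall]
    have hvol : volume (closedBall xstar r)
        = ENNReal.ofReal (r ^ d) * volume (ball (0 : EuclideanSpace ℝ (Fin d)) 1) := by
      rw [Measure.addHaar_closedBall _ _ hrpos.le, finrank_euclideanSpace_fin]
    have hlb : ENNReal.ofReal q ≤ ℙ (A i) := by
      rw [hmap]
      calc ENNReal.ofReal q ≤ ENNReal.ofReal l * volume (closedBall xstar r) := by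
            rw [hvol, hq, ENNReal.ofReal_mul hl.le,
              ENNReal.ofReal_mul (by positivity : (0 : ℝ) ≤ r ^ d)]
            gcongr
            rw [hVdef]
            exact ENNReal.ofReal_toReal_le
        _ = ∫⁻ _ in closedBall xstar r, ENNReal.ofReal l := (setLIntegral_const _ _).symm
        _ ≤ ∫⁻ x in closedBall xstar r, ENNReal.ofReal (μ x) :=
            setLIntegral_mono hμmeas.ennreal_ofReal (fun x hx =>
              ENNReal.ofReal_le_ofReal (hC1 x (closedBall_subset_closedBall hRn hx)))
    calc q = (ENNReal.ofReal q).toReal := (ENNReal.toReal_ofReal hqpos.le).symm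
      _ ≤ (ℙ (A i)).toReal := ENNReal.toReal_mono (measure_ne_top _ _) hlb
  have hrep : ∀ i, (fun ω => Real.exp (-1 * Y i ω)) =
      fun ω => (A i).indicator (fun _ => Real.exp (-1) - 1) ω + 1 := by
    intro i; funext ω
    by_cases h : dist (X i ω) xstar ≤ r
    · have hωA : ω ∈ A i := h
      simp [hY, h, Set.indicator_of_mem hωA]
    · have hωA : ω ∉ A i := h
      simp [hY, h, Set.indicator_of_notMem hωA]
  have hint : ∀ i, Integrable (fun ω => Real.exp (-1 * Y i ω)) ℙ := by
    intro i
    rw [hrep i]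
    exact (((integrable_const (Real.exp (-1) - 1)).indicator (hAmeas i))).add
      (integrable_const 1)
  have hmgf : ∀ i, mgf (Y i) ℙ (-1) = 1 + (Real.exp (-1) - 1) * (ℙ (A i)).toReal := by
    intro i
    simp only [mgf]
    rw [hrep i,
      integral_add ((integrable_const (Real.exp (-1) - 1)).indicator (hAmeas i))
        (integrable_const 1),
      integral_indicator_const _ (hAmeas i), integral_const]
    simp [smul_eq_mul, measureReal_def]
    ring
  have hmgfle : ∀ i, mgf (Y i) ℙ (-1) ≤ Real.exp ((Real.exp (-1) - 1) * q) := by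
    intro i
    have h1 : mgf (Y i) ℙ (-1) ≤ 1 + (Real.exp (-1) - 1) * q := by
      rw [hmgf i]
      nlinarith [hplow i, hexp]
    exact h1.trans (by nlinarith [Real.add_one_le_exp ((Real.exp (-1) - 1) * q)])
  set S : Ω → ℝ := ∑ i ∈ Finset.range n, Y i with hS
  have hSint : Integrable (fun ω => Real.exp (-1 * S ω)) ℙ := by
    rw [hS]
    exact hYindep.integrable_exp_mul_sum hYmeas (fun i _ => hint i)
  have hchern := measure_le_le_exp_mul_mgf (μ := ℙ) (X := S) (t := -1) (k : ℝ)
    (by norm_num) hSint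
  have hmgfS : mgf S ℙ (-1) ≤ Real.exp ((Real.exp (-1) - 1) * q) ^ n := by
    rw [hS, hYindep.mgf_sum hYmeas]
    calc ∏ i ∈ Finset.range n, mgf (Y i) ℙ (-1)
        ≤ ∏ _i ∈ Finset.range n, Real.exp ((Real.exp (-1) - 1) * q) :=
          Finset.prod_le_prod (fun i _ => mgf_nonneg) (fun i _ => hmgfle i)
      _ = _ := by rw [Finset.prod_const, Finset.card_range]
  have hkey : (ℙ {ω | S ω ≤ (k : ℝ)}).toReal ≤ 2 * Real.exp (-c * n * r ^ d) := by
    have hfinal : Real.exp ((k : ℝ)) * Real.exp ((Real.exp (-1) - 1) * q) ^ n ≤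
        2 * Real.exp (-c * n * r ^ d) := by
      rw [← Real.exp_nat_mul, ← Real.exp_add]
      have hq2 : (Real.exp (-1) - 1) * q = -(2 * c) * r ^ d := by
        rw [hq, hcdef]; ring
      have harith : (k : ℝ) + (n : ℝ) * ((Real.exp (-1) - 1) * q) ≤ -c * n * r ^ d := by
        rw [hq2]; nlinarith [hkn]
      calc Real.exp ((k : ℝ) + (n : ℝ) * ((Real.exp (-1) - 1) * q))
          ≤ Real.exp (-c * n * r ^ d) := Real.exp_le_exp.mpr harith
        _ ≤ 2 * Real.exp (-c * n * r ^ d) := by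
            nlinarith [Real.exp_pos (-c * (n : ℝ) * r ^ d)]
    calc (ℙ {ω | S ω ≤ (k : ℝ)}).toReal
        ≤ Real.exp (-(-1) * (k : ℝ)) * mgf S ℙ (-1) := hchern
      _ ≤ Real.exp ((k : ℝ)) * Real.exp ((Real.exp (-1) - 1) * q) ^ n := by
          rw [neg_neg, one_mul]
          exact mul_le_mul_of_nonneg_left hmgfS (Real.exp_nonneg _)
      _ ≤ 2 * Real.exp (-c * n * r ^ d) := hfinal
  have hPN : ℙ {ω | S ω ≤ (k : ℝ)} ≤ ENNReal.ofReal (2 * Real.exp (-c * n * r ^ d)) := by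
    rw [← ENNReal.ofReal_toReal (measure_ne_top ℙ {ω | S ω ≤ (k : ℝ)})]
    exact ENNReal.ofReal_le_ofReal hkey
  have hsub : {ω | ¬ goodEvent k φ xstar X r n ω} ⊆
      {ω | S ω ≤ (k : ℝ)} ∪
        {ω | φ * ((nearIdx xstar X r n ω).card : ℝ) ≤ zetaProj k xstar X r n ω} := by
    intro ω hω
    simp only [Set.mem_setOf_eq, goodEvent, not_and_or, not_le] at hω
    rcases hω with h | h
    · left
      have hcard : (nearIdx xstar X r n ω).card ≤ k := by omega
      have hSval : S ω = ((nearIdx xstar X r n ω).card : ℝ) := by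
        simp only [hS, Finset.sum_apply, hY, nearIdx, Finset.sum_boole]
      simp only [Set.mem_setOf_eq, hSval]
      exact_mod_cast hcard
    · right
      exact h.le
  calc ℙ {ω | ¬ goodEvent k φ xstar X r n ω}
      ≤ ℙ ({ω | S ω ≤ (k : ℝ)} ∪
          {ω | φ * ((nearIdx xstar X r n ω).card : ℝ) ≤ zetaProj k xstar X r n ω}) :=
        measure_mono hsub
    _ ≤ ℙ {ω | S ω ≤ (k : ℝ)} +
        ℙ {ω | φ * ((nearIdx xstar X r n ω).card : ℝ) ≤ zetaProj k xstar X r n ω} :=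
        measure_union_le _ _
    _ ≤ ENNReal.ofReal (2 * Real.exp (-c * n * r ^ d)) +
        ENNReal.ofReal (C₀ * Real.exp (-c₀ * (n : ℝ) ^ τ)) := add_le_add hPN (hC3 n)
    _ = ENNReal.ofReal (2 * Real.exp (-c * n * r ^ d) +
        C₀ * Real.exp (-c₀ * (n : ℝ) ^ τ)) :=
        (ENNReal.ofReal_add (by positivity) (by positivity)).symm
end
end

section
/- Under conditions (C-1) and (C-3), there exist constants c, c' > 0 and n' ∈ ℕ such that for all n ≥ n', the conditional expectation of 1/N_n given the event E_n satisfies E(1/N_n | E_n) ≤ 4 exp(−c n r̃_n^d) + 4/(c' n r̃_n^d). -/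
open MeasureTheory ProbabilityTheory Metric Finset Filter

noncomputable section

lemma mgf_bern {Ω : Type*} [MeasureSpace Ω] [IsProbabilityMeasure (ℙ : Measure Ω)]
    {A : Set Ω} (hA : MeasurableSet A) :
    mgf (A.indicator fun _ => (1:ℝ)) ℙ (-1)
      = 1 + (Real.exp (-1) - 1) * (ℙ A).toReal := by
  have hfun : (fun ω => Real.exp (-1 * A.indicator (fun _ => (1:ℝ)) ω))
      = fun ω => A.indicator (fun _ => Real.exp (-1) - 1) ω + 1 := by
    funext ω
    by_cases h : ω ∈ A <;> simp [h, Set.indicator_apply]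
  rw [mgf, hfun, integral_add ((integrable_const _).indicator hA) (integrable_const _),
    integral_indicator_const _ hA, integral_const]
  simp [mul_comm]
  simp only [measureReal_def]
  ring

lemma chernoff_bernoulli {Ω : Type*} [MeasureSpace Ω] [IsProbabilityMeasure (ℙ : Measure Ω)]
    (A : ℕ → Set Ω) (hA : ∀ i, MeasurableSet (A i))
    (hindep : iIndepFun (fun i => (A i).indicator fun _ => (1:ℝ)) ℙ)
    (p : ℝ) (hp : ∀ i, (ℙ (A i)).toReal = p) (n : ℕ) :
    (ℙ {ω | ∑ i ∈ Finset.range n, (A i).indicator (fun _ => (1:ℝ)) ω ≤ (n : ℝ) * p / 2}).toReal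
      ≤ Real.exp (-((1/2 - Real.exp (-1)) * ((n : ℝ) * p))) := by
  set Y : ℕ → Ω → ℝ := fun i => (A i).indicator fun _ => (1:ℝ) with hY
  have hYmeas : ∀ i, Measurable (Y i) := fun i => (measurable_const.indicator (hA i))
  have hYnn : ∀ i ω, 0 ≤ Y i ω := fun i ω =>
    Set.indicator_nonneg (fun _ _ => zero_le_one) ω
  have hexp_le : ∀ (x : ℝ), 0 ≤ x → ‖Real.exp (-1 * x)‖ ≤ 1 := by
    intro x hx
    rw [Real.norm_eq_abs, abs_of_pos (Real.exp_pos _)]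
    exact Real.exp_le_one_iff.mpr (by nlinarith)
  have hint : ∀ i, Integrable (fun ω => Real.exp (-1 * Y i ω)) ℙ := fun i =>
    Integrable.mono' (integrable_const 1)
      (((hYmeas i).const_mul _).exp.aestronglyMeasurable)
      (ae_of_all _ fun ω => hexp_le _ (hYnn i ω))
  have hsum_apply : ∀ ω, (∑ i ∈ Finset.range n, Y i) ω = ∑ i ∈ Finset.range n, Y i ω := by
    intro ω; simp [Finset.sum_apply]
  have hsum_meas : Measurable (∑ i ∈ Finset.range n, Y i) := by
    have : Measurable fun ω => ∑ i ∈ Finset.range n, Y i ω :=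
      Finset.measurable_sum _ fun i _ => hYmeas i
    simpa [funext hsum_apply] using this
  have hint_sum : Integrable (fun ω => Real.exp (-1 * (∑ i ∈ Finset.range n, Y i) ω)) ℙ := by
    refine Integrable.mono' (integrable_const 1)
      ((hsum_meas.const_mul _).exp.aestronglyMeasurable) (ae_of_all _ fun ω => ?_)
    refine hexp_le _ ?_
    rw [hsum_apply]
    exact Finset.sum_nonneg fun i _ => hYnn i ω
  have key := measure_le_le_exp_mul_mgf (μ := ℙ) (X := ∑ i ∈ Finset.range n, Y i)
    ((n : ℝ) * p / 2) (by norm_num : (-1 : ℝ) ≤ 0) hint_sum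
  have hmgf : mgf (∑ i ∈ Finset.range n, Y i) ℙ (-1)
      ≤ Real.exp (-(1 - Real.exp (-1)) * p) ^ n := by
    rw [hindep.mgf_sum hYmeas]
    have hfac : ∀ i ∈ Finset.range n, mgf (Y i) ℙ (-1) ≤ Real.exp (-(1 - Real.exp (-1)) * p) := by
      intro i _
      rw [hY]
      rw [mgf_bern (hA i), hp i]
      calc 1 + (Real.exp (-1) - 1) * p = 1 + (-(1 - Real.exp (-1)) * p) := by ring
        _ ≤ Real.exp (-(1 - Real.exp (-1)) * p) := by
            rw [add_comm]; exact Real.add_one_le_exp _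
    calc ∏ i ∈ Finset.range n, mgf (Y i) ℙ (-1)
        ≤ ∏ _i ∈ Finset.range n, Real.exp (-(1 - Real.exp (-1)) * p) :=
          Finset.prod_le_prod (fun i _ => mgf_nonneg) hfac
      _ = Real.exp (-(1 - Real.exp (-1)) * p) ^ n := by rw [Finset.prod_const, Finset.card_range]
  have hset : {ω | (∑ i ∈ Finset.range n, Y i) ω ≤ (n : ℝ) * p / 2}
      = {ω | ∑ i ∈ Finset.range n, Y i ω ≤ (n : ℝ) * p / 2} := by
    ext ω; simp [hsum_apply]
  rw [← hset]
  refine key.trans ?_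
  calc Real.exp (-(-1) * ((n : ℝ) * p / 2)) * mgf (∑ i ∈ Finset.range n, Y i) ℙ (-1)
      ≤ Real.exp (-(-1) * ((n : ℝ) * p / 2)) * Real.exp (-(1 - Real.exp (-1)) * p) ^ n :=
        mul_le_mul_of_nonneg_left hmgf (Real.exp_pos _).le
    _ = Real.exp (-((1/2 - Real.exp (-1)) * ((n : ℝ) * p))) := by
        rw [← Real.exp_nat_mul, ← Real.exp_add]
        ring_nf

set_option maxHeartbeats 1000000 in
/-- Under conditions (C-1) and (C-3), there exist constants `c, c' > 0` and
`n' ∈ ℕ` such that for all `n ≥ n'`, the conditional expectation of `1/N_n` given the event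
`E_n` satisfies `E(1/N_n | E_n) ≤ 4 exp(−c n r̃_n^d) + 4/(c' n r̃_n^d)`. -/
theorem stmt8 (d : ℕ) (hd : 0 < d) (xstar : EuclideanSpace ℝ (Fin d)) (R : ℝ)
    (hR : R ∈ Set.Ioo (0 : ℝ) 1) (β : ℝ) (hβ : 0 < β)
    (Ω : Type*) [MeasureSpace Ω] [IsProbabilityMeasure (ℙ : Measure Ω)]
    (X : ℕ → Ω → EuclideanSpace ℝ (Fin d)) (hXmeas : ∀ i, Measurable (X i))
    (hindep : iIndepFun X ℙ)
    (μ : EuclideanSpace ℝ (Fin d) → ℝ) (hμmeas : Measurable μ) (hμnn : ∀ x, 0 ≤ μ x)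
    (hlaw : ∀ i, Measure.map (X i) ℙ = volume.withDensity fun x => ENNReal.ofReal (μ x))
    -- (C-1):
    (l : ℝ) (hl : 0 < l) (hC1 : ∀ x ∈ closedBall xstar R, l ≤ μ x)
    -- the sequence of radii:
    (rt : ℕ → ℝ) (hrtpos : ∀ n, 0 < rt n) (hrt0 : Tendsto rt atTop (nhds 0))
    (ν : ℝ) (hν : 0 < ν)
    (hrtinf : Tendsto (fun n : ℕ => (n : ℝ) ^ ((1 : ℝ) - ν) * rt n ^ d) atTop atTop)
    -- (C-3):
    (c₀ C₀ τ φ : ℝ) (hc₀ : 0 < c₀) (hC₀ : 0 < C₀) (hτ : 0 < τ) (hφ : φ ∈ Set.Ioo (0 : ℝ) 1)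
    (hC3 : ∀ n : ℕ,
      ℙ {ω | φ * ((nearIdx xstar X (rt n) n ω).card : ℝ) ≤
          zetaProj (⌈β / 2⌉₊ - 1) xstar X (rt n) n ω} ≤
        ENNReal.ofReal (C₀ * Real.exp (-c₀ * (n : ℝ) ^ τ))) :
    ∃ c : ℝ, 0 < c ∧ ∃ c' : ℝ, 0 < c' ∧ ∃ n' : ℕ, ∀ n : ℕ, n' ≤ n →
      (∫ ω, (1 : ℝ) / ((nearIdx xstar X (rt n) n ω).card : ℝ)
          ∂(ℙ[|{ω | goodEvent (⌈β / 2⌉₊ - 1) φ xstar X (rt n) n ω}])) ≤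
        4 * Real.exp (-c * n * rt n ^ d) + 4 / (c' * n * rt n ^ d) := by
  classical
  have : Nonempty (Fin d) := ⟨⟨0, hd⟩⟩
  set w : ℕ := ⌈β / 2⌉₊ - 1 with hw
  -- volume constant of the unit ball
  set Vd : ℝ := Real.sqrt Real.pi ^ d / Real.Gamma (d / 2 + 1) with hVd
  have hVd_pos : 0 < Vd := by
    apply div_pos
    · exact pow_pos (Real.sqrt_pos.mpr Real.pi_pos) d
    · exact Real.Gamma_pos_of_pos (by positivity)
  -- the Chernoff constant
  set κ : ℝ := 1 / 2 - Real.exp (-1) with hκ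
  have hκ_pos : 0 < κ := by
    have h2 : (2 : ℝ) < Real.exp 1 := by
      have := Real.exp_one_gt_d9
      norm_num at this ⊢
      linarith
    have hmul : Real.exp (-1) * Real.exp 1 = 1 := by
      rw [← Real.exp_add]; norm_num
    have := Real.exp_pos (-1)
    rw [hκ]
    nlinarith
  refine ⟨κ * (l * Vd), by positivity, l * Vd, by positivity, ?_⟩
  set c : ℝ := κ * (l * Vd) with hc
  set c' : ℝ := l * Vd with hc'
  -- `n * rt n ^ d → ∞`
  have hg : Tendsto (fun n : ℕ => (n : ℝ) * rt n ^ d) atTop atTop := by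
    apply tendsto_atTop_mono' atTop ?_ hrtinf
    filter_upwards [eventually_ge_atTop 1] with n hn
    have h1 : (1 : ℝ) ≤ (n : ℝ) := by exact_mod_cast hn
    have : (n : ℝ) ^ ((1 : ℝ) - ν) ≤ (n : ℝ) ^ (1 : ℝ) :=
      Real.rpow_le_rpow_of_exponent_le h1 (by linarith)
    rw [Real.rpow_one] at this
    exact mul_le_mul_of_nonneg_right this (pow_nonneg (hrtpos n).le d)
  -- the eventual conditions
  have hev1 : ∀ᶠ n : ℕ in atTop, rt n ≤ R :=
    (hrt0.eventually_lt_const hR.1).mono fun n h => h.le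
  have hev2 : ∀ᶠ n : ℕ in atTop, 1 ≤ n := eventually_ge_atTop 1
  have hev3 : ∀ᶠ n : ℕ in atTop, (w : ℝ) ≤ (l * Vd / 2) * ((n : ℝ) * rt n ^ d) := by
    filter_upwards [hg.eventually_ge_atTop (2 * (w : ℝ) / (l * Vd))] with n hn
    have hlV : 0 < l * Vd := by positivity
    rw [div_le_iff₀ hlV] at hn
    nlinarith
  have hev4 : ∀ᶠ n : ℕ in atTop, Real.exp (-c * ((n : ℝ) * rt n ^ d)) ≤ 1 / 4 := by
    have hc_pos : 0 < c := by positivity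
    have h1 : Tendsto (fun n : ℕ => -c * ((n : ℝ) * rt n ^ d)) atTop atBot :=
      (tendsto_const_mul_atBot_of_neg (by linarith) ).mpr hg
    have h2 : Tendsto (fun n : ℕ => Real.exp (-c * ((n : ℝ) * rt n ^ d))) atTop (nhds 0) :=
      Real.tendsto_exp_atBot.comp h1
    exact (h2.eventually_lt_const (by norm_num : (0:ℝ) < 1/4)).mono fun n h => h.le
  have hev5 : ∀ᶠ n : ℕ in atTop, C₀ * Real.exp (-c₀ * (n : ℝ) ^ τ) ≤ 1 / 4 := by
    have h0 : Tendsto (fun n : ℕ => ((n : ℝ)) ^ τ) atTop atTop :=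
      (tendsto_rpow_atTop hτ).comp tendsto_natCast_atTop_atTop
    have h1 : Tendsto (fun n : ℕ => -c₀ * ((n : ℝ)) ^ τ) atTop atBot :=
      (tendsto_const_mul_atBot_of_neg (by linarith)).mpr h0
    have h2 : Tendsto (fun n : ℕ => C₀ * Real.exp (-c₀ * (n : ℝ) ^ τ)) atTop (nhds 0) := by
      simpa using (Real.tendsto_exp_atBot.comp h1).const_mul C₀
    exact (h2.eventually_lt_const (by norm_num : (0:ℝ) < 1/4)).mono fun n h => h.le
  obtain ⟨n', hn'⟩ := eventually_atTop.mp
    (hev1.and (hev2.and (hev3.and (hev4.and hev5))))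
  refine ⟨n', fun n hn => ?_⟩
  obtain ⟨h1, h2, h3, h4, h5⟩ := hn' n hn
  -- Setup for fixed n
  set cb : Set (EuclideanSpace ℝ (Fin d)) := closedBall xstar (rt n) with hcb
  set A : ℕ → Set Ω := fun i => X i ⁻¹' cb with hA
  have hAmeas : ∀ i, MeasurableSet (A i) := fun i => (hXmeas i) measurableSet_closedBall
  set pE : ENNReal := (volume.withDensity fun x => ENNReal.ofReal (μ x)) cb with hpE
  have hiA : ∀ i, ℙ (A i) = pE := by
    intro i
    rw [hA, hpE, ← hlaw i, Measure.map_apply (hXmeas i) measurableSet_closedBall]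
  set p : ℝ := pE.toReal with hp
  have hpE_ne_top : pE ≠ ⊤ := by
    rw [← hiA 0]; exact measure_ne_top _ _
  -- lower bound on p
  have hp_lb : l * Vd * rt n ^ d ≤ p := by
    have hsub : cb ⊆ closedBall xstar R := closedBall_subset_closedBall h1
    have hofle : ENNReal.ofReal (l * Vd * rt n ^ d) ≤ pE := by
      have hvol : volume cb = ENNReal.ofReal (rt n) ^ d * ENNReal.ofReal Vd := by
        rw [hcb, EuclideanSpace.volume_closedBall, Fintype.card_fin, hVd]
      have step1 : ENNReal.ofReal l * volume cb ≤ pE := by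
        rw [hpE, withDensity_apply _ measurableSet_closedBall]
        calc ENNReal.ofReal l * volume cb = ∫⁻ _x in cb, ENNReal.ofReal l ∂volume := by
              rw [setLIntegral_const]
          _ ≤ ∫⁻ x in cb, ENNReal.ofReal (μ x) ∂volume := by
              refine setLIntegral_mono hμmeas.ennreal_ofReal fun x hx => ?_
              exact ENNReal.ofReal_le_ofReal (hC1 x (hsub hx))
      calc ENNReal.ofReal (l * Vd * rt n ^ d)
          = ENNReal.ofReal l * (ENNReal.ofReal (rt n) ^ d * ENNReal.ofReal Vd) := by
            rw [← ENNReal.ofReal_pow (hrtpos n).le,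
              ← ENNReal.ofReal_mul (pow_nonneg (hrtpos n).le d),
              ← ENNReal.ofReal_mul hl.le]
            congr 1
            ring
        _ = ENNReal.ofReal l * volume cb := by rw [hvol]
        _ ≤ pE := step1
    exact (ENNReal.ofReal_le_iff_le_toReal hpE_ne_top).mp hofle
  have hp_pos : 0 < p := lt_of_lt_of_le (mul_pos (mul_pos hl hVd_pos) (pow_pos (hrtpos n) d)) hp_lb
  have hn_pos : (0:ℝ) < n := by exact_mod_cast h2
  have hnp_pos : 0 < (n:ℝ) * p := mul_pos hn_pos hp_pos
  -- indicators
  set Y : ℕ → Ω → ℝ := fun i => (A i).indicator fun _ => (1:ℝ) with hY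
  have hYindep : iIndepFun Y ℙ := by
    have hfeq : Y = fun i => ((cb).indicator (fun _ => (1:ℝ))) ∘ X i := by
      funext i ω
      by_cases h : X i ω ∈ cb <;> simp [hY, hA, Set.indicator_apply, h, Function.comp]
    rw [hfeq]
    exact hindep.comp _ (fun _ => measurable_const.indicator measurableSet_closedBall)
  have hcard : ∀ ω, ((nearIdx xstar X (rt n) n ω).card : ℝ) = ∑ i ∈ Finset.range n, Y i ω := by
    intro ω
    rw [nearIdx, Finset.card_filter]
    push_cast
    refine Finset.sum_congr rfl fun i _ => ?_
    by_cases h : dist (X i ω) xstar ≤ rt n <;>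
      simp [hY, hA, hcb, Set.indicator_apply, Set.mem_preimage, mem_closedBall, h]
  -- Chernoff bound
  set S : Set Ω := {ω | ∑ i ∈ Finset.range n, Y i ω ≤ (n : ℝ) * p / 2} with hS
  have hScher : (ℙ S).toReal ≤ Real.exp (-(κ * ((n:ℝ) * p))) := by
    have := chernoff_bernoulli A hAmeas hYindep p (fun i => by rw [hiA i]) n
    simpa [hS, hY, hκ] using this
  have hexp_mono : Real.exp (-(κ * ((n:ℝ) * p))) ≤ Real.exp (-c * (n:ℝ) * rt n ^ d) := by
    apply Real.exp_le_exp.mpr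
    have hle : c * ((n:ℝ) * rt n ^ d) ≤ κ * ((n:ℝ) * p) := by
      rw [hc]
      calc κ * c' * ((n:ℝ) * rt n ^ d) = κ * ((n:ℝ) * (c' * rt n ^ d)) := by ring
        _ ≤ κ * ((n:ℝ) * p) := by
            refine mul_le_mul_of_nonneg_left (mul_le_mul_of_nonneg_left ?_ hn_pos.le) hκ_pos.le
            rw [hc']; exact hp_lb
    linarith
  have hSmeas : MeasurableSet S := by
    apply measurableSet_le _ measurable_const
    exact Finset.measurable_sum _ fun i _ => measurable_const.indicator (hAmeas i)
  -- the good event has probability ≥ 1/2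
  set T : Set Ω := {ω | φ * ((nearIdx xstar X (rt n) n ω).card : ℝ) ≤
      zetaProj w xstar X (rt n) n ω} with hT
  set Ag : Set Ω := {ω | goodEvent w φ xstar X (rt n) n ω} with hAg
  have hw_le : (w : ℝ) ≤ (n:ℝ) * p / 2 := by
    refine h3.trans ?_
    calc l * Vd / 2 * ((n:ℝ) * rt n ^ d) = (n:ℝ) * (l * Vd * rt n ^ d) / 2 := by ring
      _ ≤ (n:ℝ) * p / 2 := by gcongr
  have hcompl : Agᶜ ⊆ S ∪ T := by
    intro ω hω
    rw [hAg, Set.mem_compl_iff, Set.mem_setOf_eq, goodEvent, not_and_or] at hω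
    rcases hω with hω | hω
    · left
      have hlt : (nearIdx xstar X (rt n) n ω).card ≤ w := by omega
      have hltR : ((nearIdx xstar X (rt n) n ω).card : ℝ) ≤ (w : ℝ) := by exact_mod_cast hlt
      rw [hS, Set.mem_setOf_eq, ← hcard ω]
      exact hltR.trans hw_le
    · right
      rw [hT, Set.mem_setOf_eq]
      exact (not_le.mp hω).le
  have hT14 : ℙ T ≤ ENNReal.ofReal (1/4) := by
    refine (hC3 n).trans (ENNReal.ofReal_le_ofReal h5)
  have hexp14 : Real.exp (-(κ * ((n:ℝ) * p))) ≤ 1 / 4 := by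
    refine hexp_mono.trans ?_
    calc Real.exp (-c * (n:ℝ) * rt n ^ d) = Real.exp (-c * ((n:ℝ) * rt n ^ d)) := by ring_nf
      _ ≤ 1/4 := h4
  have hS14 : ℙ S ≤ ENNReal.ofReal (1/4) :=
    (ENNReal.le_ofReal_iff_toReal_le (measure_ne_top _ _) (by norm_num)).mpr
      (hScher.trans hexp14)
  have hhalf : (ENNReal.ofReal (1/4) + ENNReal.ofReal (1/4) : ENNReal) = 2⁻¹ := by
    rw [← ENNReal.ofReal_add (by norm_num) (by norm_num)]
    rw [show (1:ℝ)/4 + 1/4 = (2:ℝ)⁻¹ by norm_num, ENNReal.ofReal_inv_of_pos (by norm_num)]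
    norm_num
  have hAg_half : (2:ENNReal)⁻¹ ≤ ℙ Ag := by
    have hcompl_le : ℙ Agᶜ ≤ 2⁻¹ := by
      calc ℙ Agᶜ ≤ ℙ (S ∪ T) := measure_mono hcompl
        _ ≤ ℙ S + ℙ T := measure_union_le _ _
        _ ≤ ENNReal.ofReal (1/4) + ENNReal.ofReal (1/4) := add_le_add hS14 hT14
        _ = 2⁻¹ := hhalf
    have huniv : (1:ENNReal) ≤ ℙ Ag + ℙ Agᶜ := by
      have := measure_union_le (μ := ℙ) Ag Agᶜ
      rwa [Set.union_compl_self, measure_univ] at this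
    calc (2:ENNReal)⁻¹ = 1 - 2⁻¹ := ENNReal.one_sub_inv_two.symm
      _ ≤ 1 - ℙ Agᶜ := tsub_le_tsub_left hcompl_le 1
      _ ≤ ℙ Ag := tsub_le_iff_right.mpr huniv
  have hinv2 : ((ℙ Ag)⁻¹).toReal ≤ 2 := by
    have hle : (ℙ Ag)⁻¹ ≤ 2 := by
      have := ENNReal.inv_le_inv' hAg_half
      simpa using this
    calc ((ℙ Ag)⁻¹).toReal ≤ (2:ENNReal).toReal := ENNReal.toReal_mono (by norm_num) hle
      _ = 2 := by norm_num
  -- integrand bounds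
  set f : Ω → ℝ := fun ω => 1 / ((nearIdx xstar X (rt n) n ω).card : ℝ) with hf
  have hf_nn : ∀ ω, 0 ≤ f ω := fun ω => by
    simp only [hf]
    exact one_div_nonneg.mpr (Nat.cast_nonneg _)
  have hcard_meas : Measurable fun ω => ((nearIdx xstar X (rt n) n ω).card : ℝ) := by
    have hm : Measurable fun ω => ∑ i ∈ Finset.range n, Y i ω :=
      Finset.measurable_sum _ fun i _ => measurable_const.indicator (hAmeas i)
    have hfun : (fun ω => ((nearIdx xstar X (rt n) n ω).card : ℝ))
        = fun ω => ∑ i ∈ Finset.range n, Y i ω := funext hcard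
    rw [hfun]
    exact hm
  have hf_meas : Measurable f := by
    simp only [hf, one_div]
    exact hcard_meas.inv
  have hf_le_one : ∀ ω, f ω ≤ 1 := by
    intro ω
    simp only [hf]
    rcases Nat.eq_zero_or_pos (nearIdx xstar X (rt n) n ω).card with h | h
    · simp [h]
    · have h1c : (1:ℝ) ≤ ((nearIdx xstar X (rt n) n ω).card : ℝ) := by exact_mod_cast h
      rw [div_le_one (by linarith)]
      linarith
  have hf_bd : ∀ ω, ‖f ω‖ ≤ 1 := fun ω => by
    rw [Real.norm_eq_abs, abs_of_nonneg (hf_nn ω)]; exact hf_le_one ω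
  set g2 : Ω → ℝ := fun ω => S.indicator (fun _ => (1:ℝ)) ω + 2/((n:ℝ)*p) with hg2
  have hg2_nn : ∀ ω, 0 ≤ g2 ω := fun ω =>
    add_nonneg (Set.indicator_nonneg (fun _ _ => zero_le_one) ω)
      (div_nonneg (by norm_num) hnp_pos.le)
  have hfg : ∀ ω, f ω ≤ g2 ω := by
    intro ω
    by_cases hωS : ω ∈ S
    · simp only [hg2, Set.indicator_of_mem hωS]
      have : 0 ≤ 2/((n:ℝ)*p) := div_nonneg (by norm_num) hnp_pos.le
      linarith [hf_le_one ω]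
    · have hgt : (n:ℝ)*p/2 < ∑ i ∈ Finset.range n, Y i ω := not_le.mp hωS
      rw [← hcard ω] at hgt
      have hcpos : 0 < ((nearIdx xstar X (rt n) n ω).card : ℝ) :=
        lt_trans (by linarith) hgt
      simp only [hf, hg2, Set.indicator_of_notMem hωS, zero_add]
      calc 1 / ((nearIdx xstar X (rt n) n ω).card : ℝ)
          ≤ 1 / ((n:ℝ)*p/2) := one_div_le_one_div_of_le (by linarith) hgt.le
        _ = 2/((n:ℝ)*p) := by field_simp
  -- integrability
  have hintf_r : Integrable f ((ℙ : Measure Ω).restrict Ag) :=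
    Integrable.mono' (integrable_const 1) hf_meas.aestronglyMeasurable (ae_of_all _ hf_bd)
  have hg2_meas : Measurable g2 := by
    simp only [hg2]
    exact (measurable_const.indicator hSmeas).add measurable_const
  have hg2_bd : ∀ ω, ‖g2 ω‖ ≤ 1 + 2/((n:ℝ)*p) := by
    intro ω
    rw [Real.norm_eq_abs, abs_of_nonneg (hg2_nn ω)]
    simp only [hg2]
    have hind : S.indicator (fun _ => (1:ℝ)) ω ≤ 1 := by
      by_cases h : ω ∈ S <;> simp [h]
    linarith
  have hintg_r : Integrable g2 ((ℙ : Measure Ω).restrict Ag) :=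
    Integrable.mono' (integrable_const _) hg2_meas.aestronglyMeasurable (ae_of_all _ hg2_bd)
  have hintg : Integrable g2 ℙ :=
    Integrable.mono' (integrable_const _) hg2_meas.aestronglyMeasurable (ae_of_all _ hg2_bd)
  -- assembling
  have hI3 : ∫ ω, g2 ω ∂ℙ = (ℙ S).toReal + 2/((n:ℝ)*p) := by
    simp only [hg2]
    rw [integral_add ((integrable_const _).indicator hSmeas) (integrable_const _),
      integral_indicator_const _ hSmeas, integral_const]
    simp
    rfl
  have hI1 : ∫ ω, f ω ∂(ℙ : Measure Ω).restrict Ag ≤ ∫ ω, g2 ω ∂(ℙ : Measure Ω).restrict Ag :=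
    integral_mono hintf_r hintg_r hfg
  have hI2 : ∫ ω, g2 ω ∂(ℙ : Measure Ω).restrict Ag ≤ ∫ ω, g2 ω ∂ℙ :=
    integral_mono_measure Measure.restrict_le_self (ae_of_all _ hg2_nn) hintg
  have hInn : (0:ℝ) ≤ ∫ ω, f ω ∂(ℙ : Measure Ω).restrict Ag := integral_nonneg hf_nn
  have hcond : ∫ ω, f ω ∂(ℙ[|Ag]) = ((ℙ Ag)⁻¹).toReal * ∫ ω, f ω ∂(ℙ : Measure Ω).restrict Ag := by
    show ∫ ω, f ω ∂((ℙ Ag)⁻¹ • (ℙ : Measure Ω).restrict Ag) = _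
    rw [integral_smul_measure, smul_eq_mul]
  have h2np : 2/((n:ℝ)*p) ≤ 2/(c' * (n:ℝ) * rt n ^ d) := by
    have hc'pos : 0 < c' * (n:ℝ) * rt n ^ d := by
      rw [hc']
      exact mul_pos (mul_pos (mul_pos hl hVd_pos) hn_pos) (pow_pos (hrtpos n) d)
    apply div_le_div_of_nonneg_left (by norm_num) hc'pos
    calc c' * (n:ℝ) * rt n ^ d = (n:ℝ) * (c' * rt n ^ d) := by ring
      _ ≤ (n:ℝ) * p := by
          refine mul_le_mul_of_nonneg_left ?_ hn_pos.le
          rw [hc']; exact hp_lb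
  calc ∫ ω, f ω ∂(ℙ[|Ag]) = ((ℙ Ag)⁻¹).toReal * ∫ ω, f ω ∂(ℙ : Measure Ω).restrict Ag := hcond
    _ ≤ 2 * (Real.exp (-c * (n:ℝ) * rt n ^ d) + 2/((n:ℝ)*p)) := by
        refine mul_le_mul hinv2 ?_ hInn (by norm_num)
        refine hI1.trans (hI2.trans ?_)
        rw [hI3]
        exact add_le_add (hScher.trans hexp_mono) le_rfl
    _ ≤ 4 * Real.exp (-c * (n:ℝ) * rt n ^ d) + 4 / (c' * (n:ℝ) * rt n ^ d) := by
        have hepos : 0 ≤ Real.exp (-c * (n:ℝ) * rt n ^ d) := (Real.exp_pos _).le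
        have h4x : 4 / (c' * (n:ℝ) * rt n ^ d) = 2 * (2 / (c' * (n:ℝ) * rt n ^ d)) := by
          ring
        linarith [h2np, hepos]
end
end

section
/- Let r̃ > 0, ω ∈ ℕ, φ ∈ (0,1), and let r_1,…,r_N ∈ [0, r̃]. Let R̃ be the N × ω matrix with (i,c) entry r_i^{2c}, assume R̃ᵀR̃ invertible, set ζ = ⟨1_N, P_{R̃} 1_N⟩ and assume ζ ≤ φ N, and let ρ = (I_N − P_{R̃})1_N/(N − ζ). Suppose e ∈ ℝ^N has entries e_i = η₀ + Σ_{c=1}^{ω} b_c r_i^{2c} + γ_i r_i^β for some η₀, b_1,…,b_ω ∈ ℝ, β > 0, and |γ_i| ≤ Γ for all i. Then |η₀ − ⟨ρ, e⟩| ≤ (1−φ)^{−1/2} Γ r̃^β. -/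
open Matrix Finset

/-!
With `P = R̃(R̃ᵀR̃)⁻¹R̃ᵀ` and `u = (I - P)1`, the symmetric idempotent `I - P` gives
`⟨u, 1⟩ = ‖u‖² = N - ζ` and `u ⊥ R̃b`, so `ρ = u / ‖u‖²` reproduces `η₀` exactly and the error is
`⟨u, g⟩ / ‖u‖²` with `gᵢ = γᵢ rᵢ^β`. Cauchy–Schwarz bounds it by
`‖g‖ / ‖u‖ ≤ √N Γ r̃^β / √((1 - φ) N)`.
-/

namespace Matrix

section Projection

variable {α m n : Type*} [CommRing α] [Fintype m] [Fintype n] [DecidableEq n]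

theorem transpose_mul_inv_mul_transpose (R : Matrix m n α) :
    (R * (Rᵀ * R)⁻¹ * Rᵀ)ᵀ = R * (Rᵀ * R)⁻¹ * Rᵀ := by
  rw [transpose_mul, transpose_mul, transpose_transpose, transpose_nonsing_inv, transpose_mul,
    transpose_transpose, Matrix.mul_assoc]

theorem mul_inv_mul_transpose_mul_self {R : Matrix m n α} (hR : IsUnit (Rᵀ * R).det) :
    R * (Rᵀ * R)⁻¹ * Rᵀ * R = R := by
  rw [Matrix.mul_assoc, Matrix.mul_assoc, nonsing_inv_mul _ hR, Matrix.mul_one]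

theorem isIdempotentElem_mul_inv_mul_transpose {R : Matrix m n α} (hR : IsUnit (Rᵀ * R).det) :
    IsIdempotentElem (R * (Rᵀ * R)⁻¹ * Rᵀ) := by
  rw [IsIdempotentElem, ← Matrix.mul_assoc, ← Matrix.mul_assoc, mul_inv_mul_transpose_mul_self hR]

end Projection

section Symmetric

variable {α m n : Type*} [CommRing α] [Fintype m] [Fintype n] {Q : Matrix m m α}

theorem mulVec_dotProduct_mulVec_of_idempotent (hQT : Qᵀ = Q) (hQ : IsIdempotentElem Q)
    (v w : m → α) : Q *ᵥ v ⬝ᵥ Q *ᵥ w = v ⬝ᵥ Q *ᵥ w := by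
  rw [← vecMul_transpose, hQT, ← dotProduct_mulVec, mulVec_mulVec, hQ.eq]

theorem mulVec_dotProduct_mulVec_eq_zero (hQT : Qᵀ = Q) {R : Matrix m n α} (hQR : Q * R = 0)
    (v : m → α) (b : n → α) : Q *ᵥ v ⬝ᵥ R *ᵥ b = 0 := by
  rw [← vecMul_transpose, hQT, ← dotProduct_mulVec, mulVec_mulVec, hQR, zero_mulVec,
    dotProduct_zero]

end Symmetric

end Matrix

section Estimator

variable {ι : Type*} [Fintype ι]

theorem sub_inv_smul_dotProduct_eq {K : Type*} [Field K] {u x y : ι → K} {S : K} (hS : S ≠ 0)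
    (hux : u ⬝ᵥ x = S) (huy : u ⬝ᵥ y = 0) (η : K) (g : ι → K) :
    η - (S⁻¹ • u) ⬝ᵥ (η • x + y + g) = -(S⁻¹ * u ⬝ᵥ g) := by
  rw [smul_dotProduct, dotProduct_add, dotProduct_add, dotProduct_smul, hux, huy, smul_eq_mul,
    smul_eq_mul]
  field_simp
  ring

theorem sq_dotProduct_le_of_abs_le (u g : ι → ℝ) {M : ℝ} (hg : ∀ i, |g i| ≤ M) :
    (u ⬝ᵥ g) ^ 2 ≤ u ⬝ᵥ u * (Fintype.card ι * M ^ 2) := by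
  have hgg : ∑ i, g i ^ 2 ≤ Fintype.card ι * M ^ 2 := by
    calc ∑ i, g i ^ 2 ≤ ∑ _i : ι, M ^ 2 :=
          sum_le_sum fun i _ => sq_le_sq' (abs_le.mp (hg i)).1 (abs_le.mp (hg i)).2
      _ = Fintype.card ι * M ^ 2 := by simp
  calc (u ⬝ᵥ g) ^ 2 ≤ (∑ i, u i ^ 2) * ∑ i, g i ^ 2 := sum_mul_sq_le_sq_mul_sq univ u g
    _ ≤ u ⬝ᵥ u * (Fintype.card ι * M ^ 2) := by
      simp only [dotProduct, ← sq]
      exact mul_le_mul_of_nonneg_left hgg (sum_nonneg fun i _ => sq_nonneg (u i))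

theorem abs_inv_mul_dotProduct_le [Nonempty ι] {u g : ι → ℝ} {S M c : ℝ} (hc : 0 < c)
    (huu : u ⬝ᵥ u = S) (hcS : c * Fintype.card ι ≤ S) (hg : ∀ i, |g i| ≤ M) :
    |S⁻¹ * u ⬝ᵥ g| ≤ c ^ (-(1 / 2) : ℝ) * M := by
  have hN : (0 : ℝ) < Fintype.card ι := Nat.cast_pos.mpr Fintype.card_pos
  have hS : 0 < S := (mul_pos hc hN).trans_le hcS
  have hM : 0 ≤ M := (abs_nonneg _).trans (hg (Classical.arbitrary ι))
  rw [Real.rpow_neg hc.le, ← Real.sqrt_eq_rpow]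
  refine abs_le_of_sq_le_sq ?_ (by positivity)
  calc (S⁻¹ * u ⬝ᵥ g) ^ 2 ≤ S⁻¹ ^ 2 * (S * (Fintype.card ι * M ^ 2)) := by
        rw [mul_pow, ← huu]
        exact mul_le_mul_of_nonneg_left (sq_dotProduct_le_of_abs_le u g hg) (sq_nonneg _)
    _ = Fintype.card ι * M ^ 2 / S := by field_simp
    _ ≤ Fintype.card ι * M ^ 2 / (c * Fintype.card ι) :=
        div_le_div_of_nonneg_left (by positivity) (by positivity) hcS
    _ = ((√c)⁻¹ * M) ^ 2 := by
        rw [mul_pow, inv_pow, Real.sq_sqrt hc.le]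
        field_simp

end Estimator

theorem stmt12_general (N ω : ℕ) (hN : 0 < N) (rt : ℝ)
    (φ : ℝ) (hφ : φ ∈ Set.Ioo (0 : ℝ) 1)
    (r : Fin N → ℝ) (hr : ∀ i, r i ∈ Set.Icc (0 : ℝ) rt)
    (Rt : Matrix (Fin N) (Fin ω) ℝ)
    (hRt : Rt = Matrix.of fun (i : Fin N) (c : Fin ω) => r i ^ (2 * ((c : ℕ) + 1)))
    (hinv : IsUnit (Rtᵀ * Rt).det)
    (ζ : ℝ)
    (hζ : ζ = (fun _ => (1 : ℝ)) ⬝ᵥ ((Rt * (Rtᵀ * Rt)⁻¹ * Rtᵀ) *ᵥ fun _ => (1 : ℝ)))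
    (hζφ : ζ ≤ φ * N)
    (ρ : Fin N → ℝ)
    (hρ : ρ = fun i =>
      ((((1 : Matrix (Fin N) (Fin N) ℝ) - Rt * (Rtᵀ * Rt)⁻¹ * Rtᵀ) *ᵥ fun _ => (1 : ℝ)) i) /
        ((N : ℝ) - ζ))
    (β : ℝ) (hβ : 0 < β) (η₀ Γ : ℝ) (b : Fin ω → ℝ) (γ : Fin N → ℝ)
    (hΓ : ∀ i, |γ i| ≤ Γ)
    (e : Fin N → ℝ)
    (he : ∀ i, e i = η₀ + (∑ c, b c * r i ^ (2 * ((c : ℕ) + 1))) + γ i * r i ^ β) :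
    |η₀ - ρ ⬝ᵥ e| ≤ (1 - φ) ^ (-(1 / 2) : ℝ) * Γ * rt ^ β := by
  have : Nonempty (Fin N) := ⟨⟨0, hN⟩⟩
  set P := Rt * (Rtᵀ * Rt)⁻¹ * Rtᵀ
  set o : Fin N → ℝ := fun _ => 1
  set u := (1 - P) *ᵥ o
  have hQT : (1 - P)ᵀ = 1 - P := by
    rw [transpose_sub, transpose_one, transpose_mul_inv_mul_transpose]
  have hou : o ⬝ᵥ u = N - ζ := by
    simp [u, sub_mulVec, hζ, o, dotProduct]
  have huo : u ⬝ᵥ o = N - ζ := by rw [dotProduct_comm, hou]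
  have huu : u ⬝ᵥ u = N - ζ := by
    rw [mulVec_dotProduct_mulVec_of_idempotent hQT
      (isIdempotentElem_mul_inv_mul_transpose hinv).one_sub, hou]
  have hub : u ⬝ᵥ Rt *ᵥ b = 0 := mulVec_dotProduct_mulVec_eq_zero hQT
    (by rw [Matrix.sub_mul, Matrix.one_mul, mul_inv_mul_transpose_mul_self hinv, sub_self]) o b
  have hρu : ρ = (N - ζ : ℝ)⁻¹ • u := by
    funext i; simp [hρ, u, o, div_eq_inv_mul]
  have heo : e = η₀ • o + Rt *ᵥ b + fun i => γ i * r i ^ β := by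
    funext i; simp [he, hRt, o, mulVec, dotProduct, mul_comm]
  have hφ1 : 0 < 1 - φ := sub_pos.2 hφ.2
  have hφS : (1 - φ) * N ≤ N - ζ := by linarith
  have hS : 0 < (N : ℝ) - ζ := (mul_pos hφ1 (Nat.cast_pos.2 hN)).trans_le hφS
  have hγr : ∀ i, |γ i * r i ^ β| ≤ Γ * rt ^ β := fun i => by
    rw [abs_mul, abs_of_nonneg (Real.rpow_nonneg (hr i).1 β)]
    exact mul_le_mul (hΓ i) (Real.rpow_le_rpow (hr i).1 (hr i).2 hβ.le)
      (Real.rpow_nonneg (hr i).1 β) ((abs_nonneg _).trans (hΓ i))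
  rw [hρu, heo, sub_inv_smul_dotProduct_eq hS.ne' huo hub, abs_neg, mul_assoc]
  exact abs_inv_mul_dotProduct_le hφ1 huu (by rwa [Fintype.card_fin]) hγr

/-- Let `r̃ > 0`, `ω ∈ ℕ`, `φ ∈ (0,1)`, and `r_1,…,r_N ∈ [0, r̃]`.  Let `R̃`
be the `N × ω` matrix with `(i,c)` entry `r_i^{2c}`, assume `R̃ᵀR̃` invertible, set
`ζ = ⟨1_N, P_{R̃} 1_N⟩` and assume `ζ ≤ φN`, and let `ρ = (I_N − P_{R̃})1_N/(N − ζ)`.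
Suppose `e_i = η₀ + Σ_{c=1}^{ω} b_c r_i^{2c} + γ_i r_i^β` with `|γ_i| ≤ Γ`.  Then
`|η₀ − ⟨ρ, e⟩| ≤ (1−φ)^{−1/2} Γ r̃^β`. -/
theorem stmt12 (N ω : ℕ) (hN : 0 < N) (rt : ℝ) (hrt : 0 < rt)
    (φ : ℝ) (hφ : φ ∈ Set.Ioo (0 : ℝ) 1)
    (r : Fin N → ℝ) (hr : ∀ i, r i ∈ Set.Icc (0 : ℝ) rt)
    (Rt : Matrix (Fin N) (Fin ω) ℝ)
    (hRt : Rt = Matrix.of fun (i : Fin N) (c : Fin ω) => r i ^ (2 * ((c : ℕ) + 1)))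
    (hinv : IsUnit (Rtᵀ * Rt).det)
    (ζ : ℝ)
    (hζ : ζ = (fun _ => (1 : ℝ)) ⬝ᵥ ((Rt * (Rtᵀ * Rt)⁻¹ * Rtᵀ) *ᵥ fun _ => (1 : ℝ)))
    (hζφ : ζ ≤ φ * N)
    (ρ : Fin N → ℝ)
    (hρ : ρ = fun i =>
      ((((1 : Matrix (Fin N) (Fin N) ℝ) - Rt * (Rtᵀ * Rt)⁻¹ * Rtᵀ) *ᵥ fun _ => (1 : ℝ)) i) /
        ((N : ℝ) - ζ))
    (β : ℝ) (hβ : 0 < β) (η₀ Γ : ℝ) (b : Fin ω → ℝ) (γ : Fin N → ℝ)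
    (hΓ : ∀ i, |γ i| ≤ Γ)
    (e : Fin N → ℝ)
    (he : ∀ i, e i = η₀ + (∑ c, b c * r i ^ (2 * ((c : ℕ) + 1))) + γ i * r i ^ β) :
    |η₀ - ρ ⬝ᵥ e| ≤ (1 - φ) ^ (-(1 / 2) : ℝ) * Γ * rt ^ β :=
  stmt12_general N ω hN rt φ hφ r hr Rt hRt hinv ζ hζ hζφ ρ hρ β hβ η₀ Γ b γ hΓ e he
end
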